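/- arXiv:1904.05338 — 9 statements merged into one kernel-verified Lean document; each statement's English description precedes it below -/
import Mathlib

section
/- Let S ⊆ ℝ^p be a closed scale-invariant set whose linear span is ℝ^p. Then for every θ ∈ ℝ^p and every ω ∈ Π(θ;S) one has the alignment identity ⟨θ, ω⟩ = ‖ω‖₂², and moreover (‖θ‖_S⋆)² = ‖θ‖₂² − dist(θ,S)². -/
open Metric Set

noncomputable section

/-- Euclidean space `ℝ^p`. -/
abbrev E (p : ℕ) := EuclideanSpace ℝ (Fin p)

/-- The (possibly set-valued) orthogonal projection onto a set `A`. -/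
def projSet {p : ℕ} (A : Set (E p)) (θ : E p) : Set (E p) :=
  {ω | ω ∈ A ∧ ‖θ - ω‖ = Metric.infDist θ A}

/-- A set is scale-invariant if it is closed under scaling by any real number. -/
def ScaleInvariant {p : ℕ} (S : Set (E p)) : Prop :=
  ∀ (a : ℝ), ∀ β ∈ S, a • β ∈ S

/-- The unit ball of the structure norm: convex hull of the unit-norm elements of `S`. -/
def structBall {p : ℕ} (S : Set (E p)) : Set (E p) :=
  convexHull ℝ {β ∈ S | ‖β‖ = 1}

/-- The dual norm `‖θ‖_S⋆ = sup {⟨β, θ⟩ : β ∈ B_S}`. -/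
def dualNorm {p : ℕ} (S : Set (E p)) (θ : E p) : ℝ :=
  sSup ((fun β => (inner ℝ β θ : ℝ)) '' structBall S)

/-!
A scale-invariant set is a union of lines `ℝ β` through unit vectors `β`, and by Pythagoras
`‖θ - r β‖² = ‖θ‖² - ⟨β, θ⟩² + (r - ⟨β, θ⟩)²`. Hence the point of `S` nearest to `θ` on the line
`ℝ β` is `⟨β, θ⟩ β`, at squared distance `‖θ‖² - ⟨β, θ⟩²`; a projection `ω = ‖ω‖ β` must therefore
satisfy `‖ω‖ = ⟨β, θ⟩`, which is the alignment identity. Minimising over the lines gives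
`dist(θ, S)² = ‖θ‖² - sup_β ⟨β, θ⟩²`, and since the unit vectors of `S` are symmetric and a linear
functional has the same supremum on a set and on its convex hull, that supremum is `(‖θ‖_S⋆)²`.
-/

theorem norm_sub_smul_sq_of_norm_eq_one {F : Type*} [NormedAddCommGroup F]
    [InnerProductSpace ℝ F] {β : F} (hβ : ‖β‖ = 1) (θ : F) (r : ℝ) :
    ‖θ - r • β‖ ^ 2 = ‖θ‖ ^ 2 - (inner ℝ β θ) ^ 2 + (r - inner ℝ β θ) ^ 2 := by
  rw [norm_sub_sq_real, real_inner_smul_right, norm_smul, Real.norm_eq_abs, mul_pow, sq_abs,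
    hβ, real_inner_comm]
  ring

namespace ScaleInvariant

variable {p : ℕ} {S : Set (E p)}

theorem neg_mem (hS : ScaleInvariant S) {β : E p} (hβ : β ∈ S) : -β ∈ S := by
  simpa using hS (-1) β hβ

theorem zero_mem (hS : ScaleInvariant S) (hne : S.Nonempty) : (0 : E p) ∈ S := by
  obtain ⟨β, hβ⟩ := hne
  simpa using hS 0 β hβ

theorem exists_unit_smul_eq (hS : ScaleInvariant S) {ω : E p} (hω : ω ∈ S) (h0 : ω ≠ 0) :
    ∃ β ∈ {β ∈ S | ‖β‖ = 1}, ω = ‖ω‖ • β :=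
  ⟨‖ω‖⁻¹ • ω, ⟨hS _ ω hω, norm_smul_inv_norm h0⟩, by
    rw [smul_smul, mul_inv_cancel₀ (norm_ne_zero_iff.2 h0), one_smul]⟩

theorem infDist_sq_le (hS : ScaleInvariant S) {β : E p} (hβ : β ∈ {β ∈ S | ‖β‖ = 1}) (θ : E p) :
    infDist θ S ^ 2 ≤ ‖θ‖ ^ 2 - (inner ℝ β θ) ^ 2 := by
  have hdist : infDist θ S ≤ ‖θ - (inner ℝ β θ : ℝ) • β‖ := by
    simpa [dist_eq_norm] using infDist_le_dist_of_mem (hS (inner ℝ β θ) β hβ.1)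
  have hpyth := norm_sub_smul_sq_of_norm_eq_one hβ.2 θ (inner ℝ β θ)
  rw [sub_self, sq 0, mul_zero, add_zero] at hpyth
  rw [← hpyth]
  exact pow_le_pow_left₀ infDist_nonneg hdist 2

theorem inner_eq_norm_sq_of_mem_projSet (hS : ScaleInvariant S) {θ ω : E p}
    (hω : ω ∈ projSet S θ) : inner ℝ θ ω = ‖ω‖ ^ 2 := by
  obtain rfl | h0 := eq_or_ne ω 0
  · simp
  obtain ⟨β, hβ, hωβ⟩ := hS.exists_unit_smul_eq hω.1 h0
  have hpyth := norm_sub_smul_sq_of_norm_eq_one hβ.2 θ ‖ω‖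
  rw [← hωβ, hω.2] at hpyth
  have hnorm : ‖ω‖ = inner ℝ β θ := by
    nlinarith [hS.infDist_sq_le hβ θ, sq_nonneg (‖ω‖ - inner ℝ β θ)]
  conv_lhs => rw [hωβ]
  rw [real_inner_smul_right, real_inner_comm, ← hnorm, sq]

theorem inner_le_sqrt_of_mem_structBall (hS : ScaleInvariant S) (θ : E p) {β : E p}
    (hβ : β ∈ structBall S) : inner ℝ β θ ≤ √(‖θ‖ ^ 2 - infDist θ S ^ 2) := by
  have hlin : IsLinearMap ℝ (fun β : E p => (inner ℝ β θ : ℝ)) :=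
    ⟨fun a b => inner_add_left a b θ, fun c x => real_inner_smul_left x θ c⟩
  refine convexHull_min (fun γ hγ => ?_) (convex_halfSpace_le hlin _) hβ
  exact (le_abs_self _).trans (Real.abs_le_sqrt (by linarith [hS.infDist_sq_le hγ θ]))

theorem bddAbove_inner_structBall (hS : ScaleInvariant S) (θ : E p) :
    BddAbove ((fun β => (inner ℝ β θ : ℝ)) '' structBall S) :=
  ⟨_, forall_mem_image.2 fun _ hβ => hS.inner_le_sqrt_of_mem_structBall θ hβ⟩

theorem dualNorm_le_sqrt (hS : ScaleInvariant S) (θ : E p) :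
    dualNorm S θ ≤ √(‖θ‖ ^ 2 - infDist θ S ^ 2) :=
  Real.sSup_le (forall_mem_image.2 fun _ hβ => hS.inner_le_sqrt_of_mem_structBall θ hβ)
    (Real.sqrt_nonneg _)

theorem abs_inner_le_dualNorm (hS : ScaleInvariant S) (θ : E p) {β : E p}
    (hβ : β ∈ {β ∈ S | ‖β‖ = 1}) : |inner ℝ β θ| ≤ dualNorm S θ := by
  have hle : ∀ γ ∈ {β ∈ S | ‖β‖ = 1}, inner ℝ γ θ ≤ dualNorm S θ := fun γ hγ =>
    le_csSup (hS.bddAbove_inner_structBall θ) ⟨γ, subset_convexHull ℝ _ hγ, rfl⟩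
  have hneg := hle (-β) ⟨hS.neg_mem hβ.1, by rw [norm_neg, hβ.2]⟩
  rw [inner_neg_left] at hneg
  exact abs_le.2 ⟨by linarith, hle β hβ⟩

theorem dualNorm_nonneg (hS : ScaleInvariant S) (θ : E p) : 0 ≤ dualNorm S θ := by
  obtain hU | ⟨β, hβ⟩ := eq_empty_or_nonempty {β ∈ S | ‖β‖ = 1}
  · simp [dualNorm, structBall, hU]
  · exact (abs_nonneg _).trans (hS.abs_inner_le_dualNorm θ hβ)

theorem sq_dualNorm_le (hS : ScaleInvariant S) (hne : S.Nonempty) (θ : E p) :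
    dualNorm S θ ^ 2 ≤ ‖θ‖ ^ 2 - infDist θ S ^ 2 := by
  have hd : infDist θ S ≤ ‖θ‖ := by simpa using infDist_le_dist_of_mem (x := θ) (hS.zero_mem hne)
  refine (Real.le_sqrt (hS.dualNorm_nonneg θ) ?_).1 (hS.dualNorm_le_sqrt θ)
  nlinarith [infDist_nonneg (x := θ) (s := S)]

theorem sq_norm_sub_sq_dualNorm_le_norm_sub_sq (hS : ScaleInvariant S) (θ : E p) {ω : E p}
    (hω : ω ∈ S) : ‖θ‖ ^ 2 - dualNorm S θ ^ 2 ≤ ‖θ - ω‖ ^ 2 := by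
  obtain rfl | h0 := eq_or_ne ω 0
  · simpa using sq_nonneg (dualNorm S θ)
  obtain ⟨β, hβ, hωβ⟩ := hS.exists_unit_smul_eq hω h0
  have hpyth := norm_sub_smul_sq_of_norm_eq_one hβ.2 θ ‖ω‖
  rw [← hωβ] at hpyth
  have hsq : (inner ℝ β θ) ^ 2 ≤ dualNorm S θ ^ 2 := by
    rw [← sq_abs]
    exact pow_le_pow_left₀ (abs_nonneg _) (hS.abs_inner_le_dualNorm θ hβ) 2
  nlinarith [sq_nonneg (‖ω‖ - inner ℝ β θ)]

theorem sq_norm_sub_sq_dualNorm_le_infDist_sq (hS : ScaleInvariant S) (hne : S.Nonempty)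
    (θ : E p) : ‖θ‖ ^ 2 - dualNorm S θ ^ 2 ≤ infDist θ S ^ 2 := by
  have hsqrt : √(‖θ‖ ^ 2 - dualNorm S θ ^ 2) ≤ infDist θ S := by
    refine (le_infDist hne).2 fun ω hω => (Real.sqrt_le_left dist_nonneg).2 ?_
    rw [dist_eq_norm]
    exact hS.sq_norm_sub_sq_dualNorm_le_norm_sub_sq θ hω
  exact (Real.sqrt_le_left infDist_nonneg).1 hsqrt

end ScaleInvariant

theorem alignment_and_dualNorm_sq_general (p : ℕ) (S : Set (E p))
    (hscale : ScaleInvariant S) (hspan : Submodule.span ℝ S = ⊤) :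
    ∀ θ : E p, (∀ ω ∈ projSet S θ, (inner ℝ θ ω : ℝ) = ‖ω‖ ^ 2) ∧
      (dualNorm S θ) ^ 2 = ‖θ‖ ^ 2 - (Metric.infDist θ S) ^ 2 := by
  intro θ
  refine ⟨fun ω hω => hscale.inner_eq_norm_sq_of_mem_projSet hω, ?_⟩
  obtain rfl | hne := eq_empty_or_nonempty S
  · -- `span ∅ = ⊤` forces `p = 0`
    have hθ : θ = 0 := by
      simpa [← hspan] using (Submodule.mem_top : θ ∈ (⊤ : Submodule ℝ (E p)))
    simp [hθ, dualNorm, structBall]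
  linarith [hscale.sq_dualNorm_le hne θ, hscale.sq_norm_sub_sq_dualNorm_le_infDist_sq hne θ]

/-- the alignment identity `⟨θ, ω⟩ = ‖ω‖₂²` for any projection `ω` of `θ`
onto `S`, and the identity `(‖θ‖_S⋆)² = ‖θ‖₂² − dist(θ, S)²`. -/
theorem alignment_and_dualNorm_sq (p : ℕ) (S : Set (E p)) (hclosed : IsClosed S)
    (hscale : ScaleInvariant S) (hspan : Submodule.span ℝ S = ⊤) :
    ∀ θ : E p, (∀ ω ∈ projSet S θ, (inner ℝ θ ω : ℝ) = ‖ω‖ ^ 2) ∧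
      (dualNorm S θ) ^ 2 = ‖θ‖ ^ 2 - (Metric.infDist θ S) ^ 2 :=
  alignment_and_dualNorm_sq_general p S hscale hspan
end
end

section
/- Let S ⊆ ℝ^p be a closed scale-invariant set whose linear span is ℝ^p and let β ∈ ℝ^p with β ≠ 0. Then the subdifferential of the dual norm ‖·‖_S⋆ at β, namely the set {g ∈ ℝ^p : ‖y‖_S⋆ ≥ ‖β‖_S⋆ + ⟨g, y − β⟩ for all y ∈ ℝ^p}, equals (1/r)·conv(Π(β;S)), where conv denotes the convex hull and r = ‖β‖_S⋆ > 0 is the common Euclidean norm of the elements of Π(β;S). -/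
/-!
The dual norm `‖·‖_S⋆` is the support function of the compact convex set `B_S`, so by
separation its subdifferential at `β` is the face of `B_S` exposed by `β`. That face is the convex
hull of the unit vectors `u ∈ S` maximising `⟨u, β⟩`, the maximum being `r`. By scale invariance
`⟨ω, β⟩ ≤ ‖ω‖ r` on `S`, so `‖β - ω‖² ≥ ‖β‖² - r² + (‖ω‖ - r)²` there, with equality exactly at
the points `r u` for those maximisers `u`: `Π(β;S)` is `r` times the set of maximisers.
-/

open Metric Set Pointwise

noncomputable section

open scoped RealInnerProductSpace

theorem IsCompact.convexHull {F : Type*} [AddCommGroup F] [Module ℝ F] [TopologicalSpace F]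
    [ContinuousAdd F] [ContinuousSMul ℝ F] [FiniteDimensional ℝ F] {s : Set F}
    (hs : IsCompact s) : IsCompact (_root_.convexHull ℝ s) := by
  let C : ℕ → Set F := fun m => (fun q : (Fin m → ℝ) × (Fin m → F) => ∑ i, q.1 i • q.2 i) ''
    (stdSimplex ℝ (Fin m) ×ˢ univ.pi fun _ => s)
  -- Carathéodory: at most `finrank + 1` points are needed.
  have hC : _root_.convexHull ℝ s = ⋃ m ∈ Finset.range (Module.finrank ℝ F + 2), C m := by
    refine Subset.antisymm (fun x hx => ?_) (iUnion₂_subset fun m _ => ?_)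
    · obtain ⟨ι, _, z, w, hzs, hz, hw, hw1, rfl⟩ := eq_pos_convex_span_of_mem_convexHull hx
      have hcard : Fintype.card ι < Module.finrank ℝ F + 2 := by
        have := hz.card_le_finrank_succ
        have := Submodule.finrank_le (vectorSpan ℝ (range z))
        omega
      let e := Fintype.equivFin ι
      refine mem_biUnion (Finset.mem_range.2 hcard) ⟨(w ∘ e.symm, z ∘ e.symm),
        ⟨⟨fun i => (hw _).le, ?_⟩, fun i _ => hzs (mem_range_self _)⟩, ?_⟩
      · simpa only [Function.comp_apply, Equiv.sum_comp] using hw1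
      · exact Equiv.sum_comp e.symm (fun i => w i • z i)
    · rintro _ ⟨⟨w, z⟩, ⟨⟨hw0, hw1⟩, hz⟩, rfl⟩
      exact (convex_convexHull ℝ s).sum_mem (fun i _ => hw0 i) hw1
        fun i _ => subset_convexHull ℝ s (hz i (mem_univ i))
  rw [hC]
  exact (Finset.range _).isCompact_biUnion fun m _ =>
    ((isCompact_stdSimplex ℝ _).prod (isCompact_univ_pi fun _ => hs)).image (by fun_prop)

theorem sep_convexHull_eq_convexHull_sep {𝕜 F : Type*} [Field 𝕜] [LinearOrder 𝕜] [IsStrictOrderedRing 𝕜]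
    [AddCommGroup F] [Module 𝕜 F] {f : F → 𝕜} (hf : IsLinearMap 𝕜 f) {K : Set F} {r : 𝕜}
    (hK : ∀ x ∈ K, f x ≤ r) :
    {x ∈ convexHull 𝕜 K | f x = r} = convexHull 𝕜 {x ∈ K | f x = r} := by
  refine Subset.antisymm ?_ (convexHull_min (fun x hx => ⟨subset_convexHull 𝕜 K hx.1, hx.2⟩)
    ((convex_convexHull 𝕜 K).inter (convex_hyperplane hf r)))
  rintro _ ⟨hx, hfx⟩
  -- With strictly positive weights, a convex combination can only reach the maximum `r` of `f`
  -- if every point it combines does.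
  obtain ⟨ι, _, z, w, hzK, -, hw, hw1, rfl⟩ := eq_pos_convex_span_of_mem_convexHull hx
  have hfz : ∀ i, f (z i) ≤ r := fun i => hK _ (hzK (mem_range_self i))
  have hslack : ∑ i, w i * (r - f (z i)) = 0 := by
    have hsum := map_sum (IsLinearMap.mk' f hf) (fun i => w i • z i) Finset.univ
    simp only [IsLinearMap.mk'_apply, hf.map_smul, smul_eq_mul] at hsum
    simp only [mul_sub, Finset.sum_sub_distrib, ← Finset.sum_mul, hw1, one_mul, ← hsum, hfx,
      sub_self]
  have hface : ∀ i, f (z i) = r := fun i => by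
    have := (Finset.sum_eq_zero_iff_of_nonneg fun j _ =>
      mul_nonneg (hw j).le (sub_nonneg.2 (hfz j))).1 hslack i (Finset.mem_univ i)
    linarith [(mul_eq_zero.1 this).resolve_left (hw i).ne']
  exact (convex_convexHull 𝕜 _).sum_mem (fun i _ => (hw i).le) hw1
    fun i _ => subset_convexHull 𝕜 _ ⟨hzK (mem_range_self i), hface i⟩

section SupportFunction

variable {H : Type*} [NormedAddCommGroup H] [InnerProductSpace ℝ H]

def supportFunction (B : Set H) (θ : H) : ℝ :=
  sSup ((fun b => ⟪b, θ⟫) '' B)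

theorem supportFunction_smul_of_nonneg (B : Set H) {c : ℝ} (hc : 0 ≤ c) (θ : H) :
    supportFunction B (c • θ) = c * supportFunction B θ := by
  simp only [supportFunction, real_inner_smul_right]
  rw [← smul_eq_mul, ← Real.sSup_smul_of_nonneg hc, ← image_smul, image_image]
  rfl

theorem supportFunction_zero (B : Set H) : supportFunction B 0 = 0 := by
  simpa using supportFunction_smul_of_nonneg B le_rfl (0 : H)

theorem inner_le_supportFunction {B : Set H} (hB : Bornology.IsBounded B) {b : H} (hb : b ∈ B)
    (θ : H) : ⟪b, θ⟫ ≤ supportFunction B θ := by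
  obtain ⟨R, hR⟩ := isBounded_iff_forall_norm_le.1 hB
  refine le_csSup ⟨R * ‖θ‖, ?_⟩ (mem_image_of_mem _ hb)
  rintro _ ⟨x, hx, rfl⟩
  exact (real_inner_le_norm x θ).trans (mul_le_mul_of_nonneg_right (hR x hx) (norm_nonneg θ))

theorem supportFunction_eq_of_isMaxOn {B : Set H} {b θ : H} (hb : b ∈ B)
    (hmax : IsMaxOn (fun x => ⟪x, θ⟫) B b) : supportFunction B θ = ⟪b, θ⟫ :=
  IsGreatest.csSup_eq ⟨mem_image_of_mem _ hb, forall_mem_image.2 hmax⟩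

theorem supportFunction_convexHull_eq_of_isMaxOn {K : Set H} {b θ : H} (hb : b ∈ K)
    (hmax : IsMaxOn (fun x => ⟪x, θ⟫) K b) :
    supportFunction (convexHull ℝ K) θ = ⟪b, θ⟫ :=
  supportFunction_eq_of_isMaxOn (subset_convexHull ℝ K hb) fun _ hx =>
    convexHull_min hmax (convex_halfSpace_le ((innerₗ H).flip θ).isLinear _) hx

theorem mem_of_forall_inner_le_supportFunction [CompleteSpace H] {B : Set H}
    (hconv : Convex ℝ B) (hclosed : IsClosed B) (hne : B.Nonempty) {g : H}
    (hg : ∀ y, ⟪g, y⟫ ≤ supportFunction B y) : g ∈ B := by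
  by_contra hgB
  obtain ⟨f, c, hfB, hfg⟩ := geometric_hahn_banach_closed_point hconv hclosed hgB
  set y := (InnerProductSpace.toDual ℝ H).symm f
  have hy : ∀ x, ⟪x, y⟫ = f x := fun x => by
    rw [real_inner_comm]; exact InnerProductSpace.toDual_symm_apply
  have hσ : supportFunction B y ≤ c :=
    csSup_le (hne.image _) (forall_mem_image.2 fun b hb => (hy b ▸ hfB b hb).le)
  linarith [hg y, hy g]

theorem subdifferential_supportFunction [CompleteSpace H] {B : Set H} (hconv : Convex ℝ B)
    (hclosed : IsClosed B) (hbdd : Bornology.IsBounded B) (hne : B.Nonempty) (β : H) :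
    {g : H | ∀ y, supportFunction B y ≥ supportFunction B β + ⟪g, y - β⟫} =
      {g ∈ B | ⟪g, β⟫ = supportFunction B β} := by
  ext g
  simp only [mem_ofPred_eq, inner_sub_right]
  constructor
  · intro hg
    have hle : ⟪g, β⟫ ≤ supportFunction B β := by
      have := hg ((2 : ℝ) • β)
      rw [supportFunction_smul_of_nonneg B zero_le_two, real_inner_smul_right] at this
      linarith
    have hge : supportFunction B β ≤ ⟪g, β⟫ := by
      have := hg 0
      rw [supportFunction_zero, inner_zero_right] at this
      linarith
    have hgB : g ∈ B := mem_of_forall_inner_le_supportFunction hconv hclosed hne fun y => by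
      linarith [hg y]
    exact ⟨hgB, le_antisymm hle hge⟩
  · rintro ⟨hgB, hgβ⟩ y
    linarith [inner_le_supportFunction hbdd hgB y]

end SupportFunction

namespace ScaleInvariant

variable {p : ℕ} {S : Set (E p)}

theorem inv_norm_smul_mem (hS : ScaleInvariant S) {ω : E p} (hω : ω ∈ S) (hω0 : ω ≠ 0) :
    ‖ω‖⁻¹ • ω ∈ {u ∈ S | ‖u‖ = 1} :=
  ⟨hS _ _ hω, norm_smul_inv_norm hω0⟩

theorem exists_unit_inner_pos (hS : ScaleInvariant S) (hspan : Submodule.span ℝ S = ⊤)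
    {β : E p} (hβ : β ≠ 0) : ∃ u ∈ {u ∈ S | ‖u‖ = 1}, 0 < ⟪u, β⟫ := by
  obtain ⟨s, hs, hsβ⟩ : ∃ s ∈ S, ⟪s, β⟫ ≠ 0 := by
    by_contra! h
    have : (innerₗ (E p)).flip β = 0 := LinearMap.ext_on hspan fun s hs => h s hs
    exact hβ (inner_self_eq_zero.1 (LinearMap.congr_fun this β))
  have ht : 0 < ⟪⟪s, β⟫ • s, β⟫ := by
    rw [real_inner_smul_left]; exact mul_self_pos.2 hsβ
  have ht0 : ⟪s, β⟫ • s ≠ 0 := fun h => by simp [h] at ht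
  refine ⟨_, hS.inv_norm_smul_mem (hS _ _ hs) ht0, ?_⟩
  rw [real_inner_smul_left]
  exact mul_pos (inv_pos.2 (norm_pos_iff.2 ht0)) ht

theorem inner_le_norm_mul (hS : ScaleInvariant S) {β u₀ : E p}
    (hmax : IsMaxOn (fun x => ⟪x, β⟫) {u ∈ S | ‖u‖ = 1} u₀) {ω : E p} (hω : ω ∈ S) :
    ⟪ω, β⟫ ≤ ‖ω‖ * ⟪u₀, β⟫ := by
  rcases eq_or_ne ω 0 with rfl | hω0
  · simp
  · have : ⟪‖ω‖⁻¹ • ω, β⟫ ≤ ⟪u₀, β⟫ := hmax (hS.inv_norm_smul_mem hω hω0)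
    rwa [real_inner_smul_left, inv_mul_le_iff₀ (norm_pos_iff.2 hω0)] at this

theorem projSet_eq (hS : ScaleInvariant S) {β u₀ : E p} (hu₀ : u₀ ∈ {u ∈ S | ‖u‖ = 1})
    (hmax : IsMaxOn (fun x => ⟪x, β⟫) {u ∈ S | ‖u‖ = 1} u₀) (hr : 0 < ⟪u₀, β⟫) :
    projSet S β = ⟪u₀, β⟫ • {u ∈ {u ∈ S | ‖u‖ = 1} | ⟪u, β⟫ = ⟪u₀, β⟫} := by
  set r := ⟪u₀, β⟫
  -- Both correction terms are nonnegative on `S`, and both vanish at `r • u₀`.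
  have hsplit : ∀ ω : E p,
      ‖β - ω‖ ^ 2 = ‖β‖ ^ 2 - r ^ 2 + (‖ω‖ - r) ^ 2 + 2 * (‖ω‖ * r - ⟪ω, β⟫) := fun ω => by
    rw [norm_sub_sq_real, real_inner_comm]; ring
  have hru₀ : r • u₀ ∈ S := hS r u₀ hu₀.1
  have hd : ‖β - r • u₀‖ ^ 2 = ‖β‖ ^ 2 - r ^ 2 := by
    rw [hsplit, norm_smul, hu₀.2, mul_one, Real.norm_of_nonneg hr.le, real_inner_smul_left]
    ring
  have hdist : infDist β S = ‖β - r • u₀‖ := by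
    refine le_antisymm ((infDist_le_dist_of_mem hru₀).trans_eq (dist_eq_norm _ _))
      ((le_infDist ⟨_, hru₀⟩).2 fun ω hω => ?_)
    rw [dist_eq_norm, ← pow_le_pow_iff_left₀ (norm_nonneg _) (norm_nonneg _) two_ne_zero,
      hsplit ω, hd]
    nlinarith [sq_nonneg (‖ω‖ - r), hS.inner_le_norm_mul hmax hω]
  ext ω
  simp only [projSet, hdist, mem_ofPred_eq, Set.mem_smul_set]
  constructor
  · rintro ⟨hω, hωd⟩
    have hzero : (‖ω‖ - r) ^ 2 + 2 * (‖ω‖ * r - ⟪ω, β⟫) = 0 := by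
      have := hsplit ω
      rw [hωd, hd] at this
      linarith
    have hcs := hS.inner_le_norm_mul hmax hω
    have hωr : ‖ω‖ = r := by nlinarith [sq_nonneg (‖ω‖ - r)]
    have hωβ : ⟪ω, β⟫ = r * r := by nlinarith [sq_nonneg (‖ω‖ - r)]
    refine ⟨r⁻¹ • ω, ⟨⟨hS _ _ hω, ?_⟩, ?_⟩, smul_inv_smul₀ hr.ne' ω⟩
    · rw [norm_smul, hωr, Real.norm_of_nonneg (inv_nonneg.2 hr.le), inv_mul_cancel₀ hr.ne']
    · rw [real_inner_smul_left, hωβ, inv_mul_cancel_left₀ hr.ne']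
  · rintro ⟨u, ⟨⟨hu, hu1⟩, hur⟩, rfl⟩
    refine ⟨hS r u hu, ?_⟩
    rw [← pow_left_inj₀ (norm_nonneg _) (norm_nonneg _) two_ne_zero, hsplit, hd, norm_smul, hu1,
      real_inner_smul_left, hur, Real.norm_of_nonneg hr.le]
    ring

end ScaleInvariant

/-- the subdifferential of the dual norm at `β ≠ 0` equals
`(1/r) • conv(Π(β;S))` where `r = ‖β‖_S⋆`. -/
theorem subdiff_dualNorm (p : ℕ) (S : Set (E p)) (hclosed : IsClosed S)
    (hscale : ScaleInvariant S) (hspan : Submodule.span ℝ S = ⊤)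
    (β : E p) (hβ : β ≠ 0) :
    {g : E p | ∀ y : E p, dualNorm S y ≥ dualNorm S β + (inner ℝ g (y - β) : ℝ)} =
      (dualNorm S β)⁻¹ • convexHull ℝ (projSet S β) := by
  set K := {u ∈ S | ‖u‖ = 1}
  have hK : IsCompact K := by
    have : K = S ∩ sphere 0 1 := by ext; simp [K]
    exact this ▸ (isCompact_sphere 0 1).inter_left hclosed
  obtain ⟨u₁, hu₁, hpos⟩ := hscale.exists_unit_inner_pos hspan hβ
  obtain ⟨u₀, hu₀, hmax⟩ :=
    hK.exists_isMaxOn (f := fun x => ⟪x, β⟫) ⟨u₁, hu₁⟩ (by fun_prop)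
  have hr : 0 < ⟪u₀, β⟫ := hpos.trans_le (hmax hu₁)
  have hB : IsCompact (structBall S) := hK.convexHull
  have hσ : dualNorm S β = ⟪u₀, β⟫ := supportFunction_convexHull_eq_of_isMaxOn hu₀ hmax
  calc _ = {g ∈ structBall S | ⟪g, β⟫ = ⟪u₀, β⟫} := by
        rw [← hσ]
        exact subdifferential_supportFunction (convex_convexHull ℝ _) hB.isClosed hB.isBounded
          ⟨u₀, subset_convexHull ℝ _ hu₀⟩ β
    _ = convexHull ℝ {u ∈ K | ⟪u, β⟫ = ⟪u₀, β⟫} :=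
        sep_convexHull_eq_convexHull_sep ((innerₗ _).flip β).isLinear hmax
    _ = _ := by rw [hσ, hscale.projSet_eq hu₀ hmax hr, convexHull_smul, inv_smul_smul₀ hr.ne']

end
end

section
/- Let A ⊆ ℝ^p be a nonempty closed set that is closed under entrywise sign changes, i.e. β ∈ A implies s∘β ∈ A for every sign vector s ∈ {−1,+1}^p (where ∘ is the entrywise product). Then for every β ∈ ℝ^p and every θ ∈ Π(β;A), one has θᵢ·βᵢ ≥ 0 for every coordinate i ∈ {1,…,p}. -/
open Metric Set

noncomputable section

/-! Flipping the sign of `θᵢ` keeps `θ` in `A` and changes its squared distance to `β` by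
`4 θᵢ βᵢ`; at a nearest point of `A` this change cannot be negative. -/

section

variable {ι : Type*} [Fintype ι] [DecidableEq ι]

def flipCoord (i : ι) (x : EuclideanSpace ℝ ι) : EuclideanSpace ℝ ι :=
  WithLp.toLp 2 fun j => (if j = i then -1 else 1) * x j

theorem norm_sub_flipCoord_sq (β θ : EuclideanSpace ℝ ι) (i : ι) :
    ‖β - flipCoord i θ‖ ^ 2 = ‖β - θ‖ ^ 2 + 4 * (θ i * β i) := by
  have hcoord : ∀ j, ‖(β - flipCoord i θ) j‖ ^ 2
      = ‖(β - θ) j‖ ^ 2 + if j = i then 4 * (θ i * β i) else 0 := by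
    intro j
    by_cases hj : j = i
    · subst hj
      simp only [flipCoord, PiLp.sub_apply, ↓reduceIte, Real.norm_eq_abs, sq_abs]
      ring
    · simp [flipCoord, hj]
  simp only [EuclideanSpace.norm_sq_eq, hcoord, Finset.sum_add_distrib, Finset.sum_ite_eq',
    Finset.mem_univ, if_true]

end

theorem norm_sub_le_of_mem_projSet {p : ℕ} {A : Set (E p)} {β θ ω : E p}
    (hθ : θ ∈ projSet A β) (hω : ω ∈ A) : ‖β - θ‖ ≤ ‖β - ω‖ := by
  rw [hθ.2, ← dist_eq_norm]
  exact infDist_le_dist_of_mem hω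

theorem proj_sign_invariant_general (p : ℕ) (A : Set (E p))
    (hsign : ∀ s : Fin p → ℝ, (∀ i, s i = 1 ∨ s i = -1) →
      ∀ β ∈ A, (WithLp.toLp 2 (fun i => s i * β i) : E p) ∈ A) :
    ∀ β : E p, ∀ θ ∈ projSet A β, ∀ i : Fin p, θ i * β i ≥ 0 := by
  intro β θ hθ i
  have hflip : flipCoord i θ ∈ A :=
    hsign _ (fun j => by by_cases hj : j = i <;> simp [hj]) θ hθ.1
  have hle := pow_le_pow_left₀ (norm_nonneg _) (norm_sub_le_of_mem_projSet hθ hflip) 2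
  rw [norm_sub_flipCoord_sq] at hle
  linarith

/-- if the nonempty closed set `A` is closed under entrywise sign changes,
then any projection `θ` of `β` onto `A` satisfies `θᵢ βᵢ ≥ 0` for every coordinate. -/
theorem proj_sign_invariant (p : ℕ) (A : Set (E p)) (hne : A.Nonempty)
    (hclosed : IsClosed A)
    (hsign : ∀ s : Fin p → ℝ, (∀ i, s i = 1 ∨ s i = -1) →
      ∀ β ∈ A, (WithLp.toLp 2 (fun i => s i * β i) : E p) ∈ A) :
    ∀ β : E p, ∀ θ ∈ projSet A β, ∀ i : Fin p, θ i * β i ≥ 0 :=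
  proj_sign_invariant_general p A hsign

end
end

section
/- Let A ⊆ ℝ^p be a nonempty closed set that is closed under permutations of the entries, i.e. β ∈ A implies π(β) ∈ A for every permutation π of the coordinates. Then for every β ∈ ℝ^p and every θ ∈ Π(β;A), the vectors β and θ are similarly ordered: βᵢ > βⱼ implies θᵢ ≥ θⱼ for all coordinates i, j ∈ {1,…,p}. -/
/-! If `βᵢ > βⱼ` but `θᵢ < θⱼ`, exchanging `θᵢ` and `θⱼ` lowers `‖β - θ‖²` by
`2 (βᵢ - βⱼ)(θⱼ - θᵢ) > 0` (the two-term rearrangement inequality); the exchanged vector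
lies in `A`, so `θ` could not have been a nearest point. -/

open Metric Set

noncomputable section

section Rearrangement

variable {ι : Type*} [Fintype ι] [DecidableEq ι]

theorem sum_sq_sub_sub_sum_sq_sub_swap {i j : ι} (hij : i ≠ j) (β θ : ι → ℝ) :
    ∑ k, (β k - θ k) ^ 2 - ∑ k, (β k - θ (Equiv.swap i j k)) ^ 2
      = 2 * ((β i - β j) * (θ j - θ i)) := by
  rw [← Finset.sum_sub_distrib,
    Fintype.sum_eq_add i j hij fun k hk => by
      rw [Equiv.swap_apply_of_ne_of_ne hk.1 hk.2, sub_self]]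
  simp only [Equiv.swap_apply_left, Equiv.swap_apply_right]
  ring

theorem norm_sub_swap_lt {i j : ι} (β θ : EuclideanSpace ℝ ι) (hβ : β j < β i)
    (hθ : θ i < θ j) :
    ‖β - WithLp.toLp 2 (fun k => θ (Equiv.swap i j k))‖ < ‖β - θ‖ := by
  have hij : i ≠ j := fun h => (h ▸ hβ).false
  have hpos : 0 < (β i - β j) * (θ j - θ i) := mul_pos (sub_pos.2 hβ) (sub_pos.2 hθ)
  rw [← sq_lt_sq₀ (norm_nonneg _) (norm_nonneg _), EuclideanSpace.norm_sq_eq,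
    EuclideanSpace.norm_sq_eq]
  simp only [PiLp.sub_apply, Real.norm_eq_abs, sq_abs]
  linarith [sum_sq_sub_sub_sum_sq_sub_swap hij β θ]

end Rearrangement

theorem proj_perm_invariant_general (p : ℕ) (A : Set (E p))
    (hperm : ∀ π : Equiv.Perm (Fin p), ∀ β ∈ A, (WithLp.toLp 2 (fun i => β (π i)) : E p) ∈ A) :
    ∀ β : E p, ∀ θ ∈ projSet A β, ∀ i j : Fin p, β i > β j → θ i ≥ θ j := by
  rintro β θ ⟨hθA, hθβ⟩ i j hβ
  by_contra! hθ
  have hswapA := hperm (Equiv.swap i j) θ hθA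
  have hcloser := norm_sub_swap_lt β θ hβ hθ
  have hinf := infDist_le_dist_of_mem hswapA (x := β)
  rw [dist_eq_norm] at hinf
  linarith

/-- if the nonempty closed set `A` is closed under permutations of the
entries, then `β` and any projection `θ` of `β` onto `A` are similarly ordered:
`βᵢ > βⱼ` implies `θᵢ ≥ θⱼ`. -/
theorem proj_perm_invariant (p : ℕ) (A : Set (E p)) (hne : A.Nonempty)
    (hclosed : IsClosed A)
    (hperm : ∀ π : Equiv.Perm (Fin p), ∀ β ∈ A, (WithLp.toLp 2 (fun i => β (π i)) : E p) ∈ A) :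
    ∀ β : E p, ∀ θ ∈ projSet A β, ∀ i j : Fin p, β i > β j → θ i ≥ θ j :=
  proj_perm_invariant_general p A hperm

end
end

section
/- Let S ⊆ ℝ^p be a nonempty closed scale-invariant set such that for every u ∈ S and every coordinate i ∈ {1,…,p}, the vector u − uᵢeᵢ (u with its i-th entry set to zero) belongs to S. Then for every β ∈ ℝ^p and every θ ∈ Π(β;S), the support of θ is contained in the support of β; that is, βᵢ = 0 implies θᵢ = 0 for every i. -/
open Metric Set

noncomputable section

theorem EuclideanSpace.norm_sq_eq_norm_sq_update_zero_add {ι : Type*} [Fintype ι]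
    [DecidableEq ι] (x : EuclideanSpace ℝ ι) (i : ι) :
    ‖x‖ ^ 2 = ‖(WithLp.toLp 2 (Function.update x i 0) : EuclideanSpace ℝ ι)‖ ^ 2 + x i ^ 2 := by
  simp only [EuclideanSpace.norm_sq_eq, Real.norm_eq_abs, sq_abs]
  rw [← Finset.add_sum_erase _ _ (Finset.mem_univ i),
    ← Finset.add_sum_erase _ _ (Finset.mem_univ i)]
  have hoff : ∀ j ∈ Finset.univ.erase i, (Function.update x.ofLp i 0 j) ^ 2 = x j ^ 2 :=
    fun j hj => by rw [Function.update_of_ne (Finset.ne_of_mem_erase hj)]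
  simp only [Function.update_self, Finset.sum_congr rfl hoff]
  ring

/-- When `β i = 0`, zeroing the `i`-th entry of `θ` lowers `‖β - θ‖ ^ 2` by exactly `θ i ^ 2`. -/
theorem apply_eq_zero_of_mem_projSet {p : ℕ} {A : Set (E p)} {β θ : E p} {i : Fin p}
    (hθ : θ ∈ projSet A β) (hθA : (WithLp.toLp 2 (Function.update θ i 0) : E p) ∈ A)
    (hβ : β i = 0) : θ i = 0 := by
  set θ' : E p := WithLp.toLp 2 (Function.update θ i 0)
  have hdiff : β - θ' = WithLp.toLp 2 (Function.update (β - θ) i 0) := by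
    ext j
    by_cases hj : j = i
    · subst hj; simp [θ', hβ]
    · simp [θ', Function.update_of_ne hj]
  have hsplit : ‖β - θ‖ ^ 2 = ‖β - θ'‖ ^ 2 + θ i ^ 2 := by
    rw [EuclideanSpace.norm_sq_eq_norm_sq_update_zero_add (β - θ) i, hdiff]
    simp [hβ]
  have hle : ‖β - θ‖ ^ 2 ≤ ‖β - θ'‖ ^ 2 :=
    pow_le_pow_left₀ (norm_nonneg _) (norm_sub_le_of_mem_projSet hθ hθA) 2
  exact pow_eq_zero_iff two_ne_zero |>.mp (le_antisymm (by linarith) (sq_nonneg _))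

theorem proj_support_monotone_general (p : ℕ) (S : Set (E p))
    (hzero : ∀ u ∈ S, ∀ i : Fin p, (WithLp.toLp 2 (Function.update u i 0) : E p) ∈ S) :
    ∀ β : E p, ∀ θ ∈ projSet S β, ∀ i : Fin p, β i = 0 → θ i = 0 :=
  fun _ θ hθ i hβ => apply_eq_zero_of_mem_projSet hθ (hzero θ hθ.1 i) hβ

/-- if `S` is a nonempty closed scale-invariant set that is stable under
zeroing out any single entry, then any projection `θ` of `β` onto `S` has support
contained in the support of `β`: `βᵢ = 0` implies `θᵢ = 0`. -/
theorem proj_support_monotone (p : ℕ) (S : Set (E p)) (hne : S.Nonempty)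
    (hclosed : IsClosed S) (hscale : ScaleInvariant S)
    (hzero : ∀ u ∈ S, ∀ i : Fin p, (WithLp.toLp 2 (Function.update u i 0) : E p) ∈ S) :
    ∀ β : E p, ∀ θ ∈ projSet S β, ∀ i : Fin p, β i = 0 → θ i = 0 :=
  proj_support_monotone_general p S hzero

end
end

section
/- Let 1 ≤ k ≤ p and let ‖·‖_{k□1} be the structure norm of S_{k,1}, i.e. the gauge of the convex hull of S_{k,1} ∩ {x : ‖x‖₂ = 1}. Then for every β ∈ ℝ^p, ‖β‖_{k□1} = max{ (1/√k)·‖β‖₁, √k·‖β‖_∞ }. -/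
/-!
On the unit sphere, `S_{k,1}` consists of the vectors with exactly `k` nonzero entries, all of
absolute value `a = 1/√k`: their sorted absolute values are `k` copies of some `a` followed by
zeros, and the norm fixes `a`. The convex hull of these atoms is the polytope
`‖x‖₁ ≤ k a, ‖x‖_∞ ≤ a`. For the nontrivial inclusion, flip signs to make a point `y` of the
polytope nonnegative. If `y` has more than `k` nonzero entries, two of them lie strictly between
`0` and `a`; shifting mass between them (pipage rounding) in either direction until one reaches
`0` or `a` writes `y` as a convex combination of two points of the polytope with fewer fractional
entries. Once at most `k` entries are nonzero, `y` lies in a cube `[-a, a]^T` with `|T| = k`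
whose vertices are atoms. Finally, the gauge of the sublevel set `{N ≤ 1}` of a nonnegative,
positively homogeneous `N` is `N` itself.
-/

open Metric Set

noncomputable section

/-- The absolute values of the entries of `β`, sorted in descending order. -/
def sortedAbs {p : ℕ} (β : E p) : List ℝ :=
  List.insertionSort (· ≥ ·) (List.ofFn fun i => |β i|)

/-- The set `S_{k,d}` of vectors with at most `k` nonzero entries whose `k` largest
absolute values take at most `d` distinct values. -/
def Skd (p k d : ℕ) : Set (E p) :=
  {β | (Finset.univ.filter fun i => β i ≠ 0).card ≤ k ∧
    ((Finset.range k).image fun i => (sortedAbs β).getD i 0).card ≤ d}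

/-- The doubly-sparse norm `‖·‖_{k□d}`: the gauge of the convex hull of the unit-norm
elements of `S_{k,d}`. -/
def kdNorm (p k d : ℕ) (β : E p) : ℝ :=
  gauge (convexHull ℝ (Skd p k d ∩ {x : E p | ‖x‖ = 1})) β

open scoped Pointwise

theorem Convex.mem_of_add_smul_mem_of_sub_smul_mem {V : Type*} [AddCommGroup V] [Module ℝ V]
    {C : Set V} (hC : Convex ℝ C) {x v : V} {u w : ℝ} (hu : 0 < u) (hw : 0 < w)
    (h₁ : x + u • v ∈ C) (h₂ : x - w • v ∈ C) : x ∈ C := by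
  convert hC h₁ h₂ (a := w / (u + w)) (b := u / (u + w)) (by positivity) (by positivity)
    (by field_simp; ring) using 1
  match_scalars <;> field_simp <;> ring

theorem exists_pos_shift_to_boundary {a b c : ℝ} (hb : b ∈ Ioo 0 a) (hc : c ∈ Ioo 0 a) :
    ∃ u > 0, b + u ∈ Icc 0 a ∧ c - u ∈ Icc 0 a ∧ (b + u ∉ Ioo 0 a ∨ c - u ∉ Ioo 0 a) := by
  obtain ⟨hb₀, hba⟩ := hb
  obtain ⟨hc₀, hca⟩ := hc
  have hu₁ : min (a - b) c ≤ a - b := min_le_left _ _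
  have hu₂ : min (a - b) c ≤ c := min_le_right _ _
  have hu₀ : 0 < min (a - b) c := lt_min (by linarith) hc₀
  refine ⟨_, hu₀, ⟨by linarith, by linarith⟩, ⟨by linarith, by linarith⟩, ?_⟩
  rcases min_cases (a - b) c with ⟨h, _⟩ | ⟨h, _⟩
  · left; simp [h]
  · right; simp [h]

theorem gauge_setOf_le_one {F : Type*} [AddCommGroup F] [Module ℝ F] {f : F → ℝ}
    (hf₀ : ∀ x, 0 ≤ f x) (hf : ∀ c : ℝ, 0 ≤ c → ∀ x, f (c • x) = c * f x) :
    gauge {x | f x ≤ 1} = f := by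
  funext x
  have hmem : {r | r ∈ Ioi (0 : ℝ) ∧ x ∈ r • {x | f x ≤ 1}} = Ioi 0 ∩ Ici (f x) := by
    ext r
    refine and_congr_right fun hr => ?_
    rw [mem_smul_set_iff_inv_smul_mem₀ (ne_of_gt hr), mem_ofPred_eq, hf _ (inv_nonneg.2 hr.le),
      inv_mul_le_iff₀ hr, mul_one, mem_Ici]
  rw [gauge_def, hmem]
  rcases (hf₀ x).eq_or_lt with h | h
  · rw [← h, inter_eq_left.2 Ioi_subset_Ici_self, csInf_Ioi]
  · rw [inter_eq_right.2 (Ici_subset_Ioi.2 h), csInf_Ici]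

theorem convexHull_preimage_linearEquiv {V W : Type*} [AddCommGroup V] [Module ℝ V]
    [AddCommGroup W] [Module ℝ W] (e : V ≃ₗ[ℝ] W) (s : Set W) :
    convexHull ℝ (e ⁻¹' s) = e ⁻¹' convexHull ℝ s := by
  rw [← e.image_symm_eq_preimage, ← e.image_symm_eq_preimage]
  exact (e.symm.toLinearMap.image_convexHull s).symm

section Finite

variable {ι : Type*} [Fintype ι]

theorem convex_setOf_sum_abs_le_and_abs_le (c a : ℝ) :
    Convex ℝ {x : ι → ℝ | ∑ i, |x i| ≤ c ∧ ∀ i, |x i| ≤ a} := by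
  intro x hx y hy θ η hθ hη hθη
  have key : ∀ i, |(θ • x + η • y) i| ≤ θ * |x i| + η * |y i| := fun i => by
    simpa [abs_mul, abs_of_nonneg hθ, abs_of_nonneg hη] using abs_add_le (θ * x i) (η * y i)
  refine ⟨?_, fun i => ?_⟩
  · calc ∑ i, |(θ • x + η • y) i| ≤ ∑ i, (θ * |x i| + η * |y i|) :=
          Finset.sum_le_sum fun i _ => key i
      _ = θ * ∑ i, |x i| + η * ∑ i, |y i| := by
          rw [Finset.sum_add_distrib, Finset.mul_sum, Finset.mul_sum]
      _ ≤ θ * c + η * c := by gcongr; exacts [hx.1, hy.1]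
      _ = c := by rw [← add_mul, hθη, one_mul]
  · calc |(θ • x + η • y) i| ≤ θ * a + η * a := (key i).trans (by gcongr; exacts [hx.2 i, hy.2 i])
      _ = a := by rw [← add_mul, hθη, one_mul]

def kOneNorm (k : ℕ) (x : ι → ℝ) : ℝ :=
  max ((Real.sqrt k)⁻¹ * ∑ i, |x i|) (Real.sqrt k * ⨆ i, |x i|)

theorem kOneNorm_nonneg (k : ℕ) (x : ι → ℝ) : 0 ≤ kOneNorm k x :=
  le_max_of_le_left (mul_nonneg (by positivity) (Finset.sum_nonneg fun i _ => abs_nonneg _))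

theorem kOneNorm_smul_of_nonneg (k : ℕ) {c : ℝ} (hc : 0 ≤ c) (x : ι → ℝ) :
    kOneNorm k (c • x) = c * kOneNorm k x := by
  have habs : ∀ i, |(c • x) i| = c * |x i| := fun i => by simp [abs_mul, abs_of_nonneg hc]
  simp only [kOneNorm, habs, ← Finset.mul_sum, ← Real.mul_iSup_of_nonneg hc,
    mul_max_of_nonneg _ _ hc]
  ring_nf

theorem kOneNorm_le_one_iff {k : ℕ} (hk : 0 < k) (x : ι → ℝ) :
    kOneNorm k x ≤ 1 ↔ ∑ i, |x i| ≤ k * (Real.sqrt k)⁻¹ ∧ ∀ i, |x i| ≤ (Real.sqrt k)⁻¹ := by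
  have hs : 0 < Real.sqrt k := Real.sqrt_pos.2 (Nat.cast_pos.2 hk)
  have hks : (k : ℝ) * (Real.sqrt k)⁻¹ = Real.sqrt k := by
    rw [mul_inv_eq_iff_eq_mul₀ hs.ne', Real.mul_self_sqrt (Nat.cast_nonneg k)]
  rw [kOneNorm, max_le_iff, inv_mul_le_iff₀ hs, mul_one, hks, ← le_div_iff₀' hs, one_div]
  exact and_congr_right' ⟨fun h i => (le_ciSup (Finite.bddAbove_range _) i).trans h,
    fun h => Real.iSup_le h (inv_nonneg.2 hs.le)⟩

end Finite

section SparseFlat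

variable {ι : Type*} [DecidableEq ι]

def sparseFlat (k : ℕ) (a : ℝ) : Set (ι → ℝ) :=
  {x | ∃ T : Finset ι, T.card = k ∧ ∀ i, |x i| = if i ∈ T then a else 0}

theorem mem_convexHull_sparseFlat_of_abs {k : ℕ} {a : ℝ} {x : ι → ℝ}
    (h : (fun i => |x i|) ∈ convexHull ℝ (sparseFlat k a)) :
    x ∈ convexHull ℝ (sparseFlat k a) := by
  set s : ι → ℝ := fun i => if 0 ≤ x i then 1 else -1
  have hs : ∀ i, |s i| = 1 := fun i => by by_cases hi : 0 ≤ x i <;> simp [s, hi]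
  have hflip : LinearMap.mulLeft ℝ s '' sparseFlat k a ⊆ sparseFlat k a := by
    rintro _ ⟨y, ⟨T, hT, hy⟩, rfl⟩
    exact ⟨T, hT, fun i => by simp [abs_mul, hs, hy]⟩
  have hx : LinearMap.mulLeft ℝ s (fun i => |x i|) = x := by
    ext i
    by_cases hi : 0 ≤ x i
    · simp [s, hi, abs_of_nonneg hi]
    · simp [s, hi, abs_of_neg (not_le.1 hi)]
  rw [← hx]
  exact convexHull_mono hflip
    ((LinearMap.mulLeft ℝ s).image_convexHull (sparseFlat k a) ▸ mem_image_of_mem _ h)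

variable {i j : ι}

def pipage (i j : ι) (t : ℝ) (y : ι → ℝ) : ι → ℝ :=
  y + t • (Pi.single i 1 - Pi.single j 1)

theorem pipage_apply (hij : i ≠ j) (t : ℝ) (y : ι → ℝ) (m : ι) :
    pipage i j t y m = if m = i then y i + t else if m = j then y j - t else y m := by
  by_cases hmi : m = i
  · subst hmi; simp [pipage, hij]
  · by_cases hmj : m = j
    · subst hmj; simp [pipage, hmi, sub_eq_add_neg]
    · simp [pipage, hmi, hmj]

theorem pipage_mem_Icc (hij : i ≠ j) {a t : ℝ} {y : ι → ℝ} (hy : ∀ m, y m ∈ Icc 0 a)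
    (hti : y i + t ∈ Icc 0 a) (htj : y j - t ∈ Icc 0 a) (m : ι) :
    pipage i j t y m ∈ Icc 0 a := by
  rw [pipage_apply hij]
  split_ifs
  exacts [hti, htj, hy m]

variable [Fintype ι]

theorem sum_pipage (i j : ι) (t : ℝ) (y : ι → ℝ) : ∑ m, pipage i j t y m = ∑ m, y m := by
  simp [pipage, Finset.sum_add_distrib, ← Finset.mul_sum]

def fractionalCoords (a : ℝ) (y : ι → ℝ) : Finset ι :=
  Finset.univ.filter fun i => y i ∈ Ioo 0 a

theorem fractionalCoords_pipage_ssubset (hij : i ≠ j) {a t : ℝ} {y : ι → ℝ}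
    (hi : i ∈ fractionalCoords a y) (hj : j ∈ fractionalCoords a y)
    (hend : y i + t ∉ Ioo 0 a ∨ y j - t ∉ Ioo 0 a) :
    fractionalCoords a (pipage i j t y) ⊂ fractionalCoords a y := by
  have hsub : fractionalCoords a (pipage i j t y) ⊆ fractionalCoords a y := by
    intro m hm
    by_cases hmi : m = i
    · exact hmi ▸ hi
    by_cases hmj : m = j
    · exact hmj ▸ hj
    simpa [fractionalCoords, pipage_apply hij, hmi, hmj] using hm
  refine (Finset.ssubset_iff_of_subset hsub).2 ?_
  rcases hend with h | h
  · exact ⟨i, hi, by simpa [fractionalCoords, pipage_apply hij] using h⟩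
  · exact ⟨j, hj, by simpa [fractionalCoords, pipage_apply hij, hij.symm] using h⟩

theorem mem_convexHull_sparseFlat_of_support_subset {k : ℕ} {a : ℝ} (ha : 0 ≤ a)
    {T : Finset ι} (hT : T.card = k) {x : ι → ℝ} (hxT : ∀ i ∉ T, x i = 0)
    (hxa : ∀ i, |x i| ≤ a) : x ∈ convexHull ℝ (sparseFlat k a) := by
  have hcube : Set.univ.pi (fun i => if i ∈ T then {-a, a} else {0}) ⊆ sparseFlat k a := by
    intro y hy
    refine ⟨T, hT, fun i => ?_⟩
    have hyi : y i ∈ (if i ∈ T then {-a, a} else {0} : Set ℝ) := hy i (mem_univ i)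
    split_ifs at hyi ⊢
    · rcases hyi with h | h <;> simp [show y i = _ from h, abs_of_nonneg ha]
    · rw [show y i = 0 from hyi, abs_zero]
  refine convexHull_mono hcube ?_
  rw [convexHull_pi]
  intro i _
  dsimp only
  split_ifs with hi
  · rw [convexHull_pair, segment_eq_Icc (by linarith)]
    exact abs_le.1 (hxa i)
  · simp [hxT i hi]

theorem one_lt_card_fractionalCoords {k : ℕ} {a : ℝ} {y : ι → ℝ} (hy : ∀ i, y i ∈ Icc 0 a)
    (hsum : ∑ i, y i ≤ k * a) (hk : k < (Finset.univ.filter fun i => y i ≠ 0).card) :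
    1 < (fractionalCoords a y).card := by
  set S := Finset.univ.filter fun i => y i ≠ 0
  have hpos : ∀ i ∈ S, 0 < y i := fun i hi => (hy i).1.lt_of_ne (Finset.mem_filter.1 hi).2.symm
  obtain ⟨j, hjS, hjmin⟩ := S.exists_min_image y (Finset.card_pos.1 (by omega))
  by_contra hF
  have hfull : ∀ i ∈ S.erase j, y i = a := by
    intro i hi
    obtain ⟨hij, hiS⟩ := Finset.mem_erase.1 hi
    by_contra hia
    have hilt : y i < a := (hy i).2.lt_of_ne hia
    refine hF (Finset.one_lt_card.2 ⟨i, ?_, j, ?_, hij⟩) <;>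
      simp only [fractionalCoords, Finset.mem_filter, Finset.mem_univ, true_and, mem_Ioo]
    · exact ⟨hpos i hiS, hilt⟩
    · exact ⟨hpos j hjS, (hjmin i hiS).trans_lt hilt⟩
  have hsumS : ∑ i ∈ S, y i = y j + (S.card - 1 : ℕ) * a := by
    rw [← Finset.add_sum_erase S y hjS, Finset.sum_congr rfl hfull, Finset.sum_const,
      Finset.card_erase_of_mem hjS, nsmul_eq_mul]
  have hSle : ∑ i ∈ S, y i ≤ ∑ i, y i :=
    Finset.sum_le_sum_of_subset_of_nonneg (Finset.subset_univ S) fun i _ _ => (hy i).1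
  have hkS : (k : ℝ) ≤ (S.card - 1 : ℕ) := by exact_mod_cast Nat.le_sub_one_of_lt hk
  nlinarith [hpos j hjS, (hy j).1.trans (hy j).2]

theorem mem_convexHull_sparseFlat_of_nonneg {k : ℕ} (hk : k ≤ Fintype.card ι) {a : ℝ}
    (ha : 0 ≤ a) {y : ι → ℝ} (hy : ∀ i, y i ∈ Icc 0 a) (hsum : ∑ i, y i ≤ k * a) :
    y ∈ convexHull ℝ (sparseFlat k a) := by
  induction hn : (fractionalCoords a y).card using Nat.strong_induction_on generalizing y with
  | _ n ih =>
  by_cases hS : (Finset.univ.filter fun i => y i ≠ 0).card ≤ k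
  · obtain ⟨T, hST, hT⟩ := Finset.exists_superset_card_eq hS (by simpa using hk)
    refine mem_convexHull_sparseFlat_of_support_subset ha hT (fun i hi => ?_) fun i => ?_
    · by_contra h
      exact hi (hST (by simpa using h))
    · rw [abs_of_nonneg (hy i).1]
      exact (hy i).2
  obtain ⟨i, hi, j, hj, hij⟩ :=
    Finset.one_lt_card.1 (one_lt_card_fractionalCoords hy hsum (not_le.1 hS))
  have hmove : ∀ t, y i + t ∈ Icc 0 a → y j - t ∈ Icc 0 a →
      (y i + t ∉ Ioo 0 a ∨ y j - t ∉ Ioo 0 a) → pipage i j t y ∈ convexHull ℝ (sparseFlat k a) :=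
    fun t hti htj hend => ih _ (hn ▸ Finset.card_lt_card
      (fractionalCoords_pipage_ssubset hij hi hj hend)) (pipage_mem_Icc hij hy hti htj)
      (by rwa [sum_pipage]) rfl
  -- `y` lies between the results of shifting mass `u` from `j` to `i` and `w` from `i` to `j`.
  obtain ⟨u, hu, hui, huj, huend⟩ :=
    exists_pos_shift_to_boundary (Finset.mem_filter.1 hi).2 (Finset.mem_filter.1 hj).2
  obtain ⟨w, hw, hwj, hwi, hwend⟩ :=
    exists_pos_shift_to_boundary (Finset.mem_filter.1 hj).2 (Finset.mem_filter.1 hi).2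
  refine (convex_convexHull ℝ _).mem_of_add_smul_mem_of_sub_smul_mem hu hw
    (hmove u hui huj huend) ?_
  have h := hmove (-w) (by rwa [← sub_eq_add_neg]) (by rwa [sub_neg_eq_add])
    (by rwa [← sub_eq_add_neg, sub_neg_eq_add, or_comm])
  rwa [pipage, neg_smul, ← sub_eq_add_neg] at h

theorem convexHull_sparseFlat {k : ℕ} (hk : k ≤ Fintype.card ι) {a : ℝ} (ha : 0 ≤ a) :
    convexHull ℝ (sparseFlat k a) = {x : ι → ℝ | ∑ i, |x i| ≤ k * a ∧ ∀ i, |x i| ≤ a} := by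
  refine Subset.antisymm (convexHull_min ?_ (convex_setOf_sum_abs_le_and_abs_le _ _)) ?_
  · rintro x ⟨T, hT, hx⟩
    refine ⟨by simp [hx, Finset.sum_ite_mem, hT], fun i => ?_⟩
    rw [hx]
    split_ifs <;> simp [ha]
  · rintro x ⟨hsum, hxa⟩
    exact mem_convexHull_sparseFlat_of_abs
      (mem_convexHull_sparseFlat_of_nonneg hk ha (fun i => ⟨abs_nonneg _, hxa i⟩) hsum)

theorem convexHull_sparseFlat_inv_sqrt {k : ℕ} (hk0 : 0 < k) (hk : k ≤ Fintype.card ι) :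
    convexHull ℝ (sparseFlat k (Real.sqrt k)⁻¹) = {x : ι → ℝ | kOneNorm k x ≤ 1} := by
  ext x
  rw [convexHull_sparseFlat hk (by positivity), mem_ofPred_eq, mem_ofPred_eq,
    kOneNorm_le_one_iff hk0]

theorem map_abs_of_mem_sparseFlat {k : ℕ} {a : ℝ} {x : ι → ℝ} (hx : x ∈ sparseFlat k a) :
    (Finset.univ.val.map fun i => |x i|) =
      Multiset.replicate k a + Multiset.replicate (Fintype.card ι - k) 0 := by
  obtain ⟨T, hT, hx⟩ := hx
  rw [← Multiset.filter_add_not (· ∈ T) Finset.univ.val, Multiset.map_add]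
  congr 1
  · rw [Multiset.map_congr rfl fun i hi => by rw [hx, if_pos (Multiset.mem_filter.1 hi).2],
      Multiset.map_const']
    congr
    change (Finset.univ.filter (· ∈ T)).card = k
    simpa using hT
  · rw [Multiset.map_congr rfl fun i hi => by rw [hx, if_neg (Multiset.mem_filter.1 hi).2],
      Multiset.map_const']
    congr
    change (Finset.univ.filter (· ∉ T)).card = _
    rw [Finset.filter_not, Finset.card_sdiff_of_subset (Finset.filter_subset _ _)]
    simp [hT]

theorem mem_sparseFlat_of_map_abs {k m : ℕ} {a : ℝ} {x : ι → ℝ} (ha : a ≠ 0)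
    (hx : (Finset.univ.val.map fun i => |x i|) = Multiset.replicate k a + Multiset.replicate m 0) :
    x ∈ sparseFlat k a := by
  refine ⟨Finset.univ.filter fun i => a = |x i|, ?_, fun i => ?_⟩
  · have := congrArg (Multiset.count a) hx
    rw [Multiset.count_map, Multiset.count_add, Multiset.count_replicate_self,
      Multiset.count_replicate, if_neg ha.symm, add_zero] at this
    exact this
  · have hi : |x i| ∈ Multiset.replicate k a + Multiset.replicate m 0 :=
      hx ▸ Multiset.mem_map_of_mem _ (Finset.mem_univ_val i)
    rw [Multiset.mem_add] at hi
    split_ifs with h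
    · exact ((Finset.mem_filter.1 h).2).symm
    · rcases hi with hi | hi
      · exact absurd (Multiset.eq_of_mem_replicate hi).symm (by simpa using h)
      · exact Multiset.eq_of_mem_replicate hi

end SparseFlat

theorem sum_sq_eq_of_map_abs {ι : Type*} [Fintype ι] {k m : ℕ} {a : ℝ} {x : ι → ℝ}
    (hx : (Finset.univ.val.map fun i => |x i|) = Multiset.replicate k a + Multiset.replicate m 0) :
    ∑ i, x i ^ 2 = k * a ^ 2 := by
  have := congrArg (fun s => (s.map (· ^ 2)).sum) hx
  simpa [Multiset.map_map, Function.comp_def, ← Finset.sum_eq_multiset_sum] using this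

section SortedAbs

variable {p : ℕ}

theorem coe_sortedAbs (β : E p) :
    (sortedAbs β : Multiset ℝ) = Finset.univ.val.map fun i => |β i| := by
  rw [Fin.univ_val_map]
  exact Multiset.coe_eq_coe.2 (List.perm_insertionSort _ _)

theorem sortedAbs_eq_of_coe_eq {β : E p} {L : List ℝ} (hL : L.Pairwise (· ≥ ·))
    (h : (L : Multiset ℝ) = Finset.univ.val.map fun i => |β i|) : sortedAbs β = L :=
  List.Perm.eq_of_pairwise' (List.pairwise_insertionSort _ _) hL
    (Multiset.coe_eq_coe.1 ((coe_sortedAbs β).trans h.symm))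

theorem nonneg_of_mem_sortedAbs {β : E p} {x : ℝ} (hx : x ∈ sortedAbs β) : 0 ≤ x := by
  obtain ⟨i, -, rfl⟩ := Multiset.mem_map.1 (coe_sortedAbs β ▸ Multiset.mem_coe.2 hx)
  exact abs_nonneg _

theorem card_support_eq_countP_sortedAbs (β : E p) :
    (Finset.univ.filter fun i => β i ≠ 0).card = (sortedAbs β).countP (· ≠ 0) := by
  rw [← Multiset.coe_countP, coe_sortedAbs, Multiset.countP_map]
  simp [Finset.card, Finset.filter_val]

theorem sortedAbs_eq_replicate_of_mem_Skd_one {k : ℕ} (hk1 : 1 ≤ k) (hkp : k ≤ p) {β : E p}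
    (hβ : β ∈ Skd p k 1) :
    sortedAbs β = List.replicate k ((sortedAbs β).getD 0 0) ++ List.replicate (p - k) 0 := by
  obtain ⟨hsupp, himg⟩ := hβ
  rw [card_support_eq_countP_sortedAbs] at hsupp
  set l := sortedAbs β
  set a := l.getD 0 0
  have hlen : l.length = p := by simp [l, sortedAbs, List.length_insertionSort]
  have htake : l.take k = List.replicate k a := by
    refine List.ext_getElem (by simp [hlen, hkp]) fun m hm _ => ?_
    simp only [List.length_take, lt_min_iff] at hm
    rw [List.getElem_take, List.getElem_replicate, ← List.getD_eq_getElem l 0]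
    exact Finset.card_le_one.1 himg _ (Finset.mem_image_of_mem _ (Finset.mem_range.2 hm.1))
      _ (Finset.mem_image_of_mem _ (Finset.mem_range.2 hk1))
  have hsorted : (l.take k ++ l.drop k).Pairwise (· ≥ ·) := by
    rw [List.take_append_drop]
    exact List.pairwise_insertionSort _ _
  have hdrop : l.drop k = List.replicate (p - k) 0 := by
    refine List.eq_replicate_iff.2 ⟨by simp [hlen], fun x hx => ?_⟩
    by_contra hx0
    have hxpos : 0 < x := (nonneg_of_mem_sortedAbs (List.mem_of_mem_drop hx)).lt_of_ne' hx0
    have hxa : x ≤ a := (List.pairwise_append.1 hsorted).2.2 a (by simp [htake]; omega) x hx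
    have hcount : 0 < (l.drop k).countP (· ≠ 0) :=
      List.countP_pos_iff.2 ⟨x, hx, by simpa using hx0⟩
    rw [← List.take_append_drop k l, List.countP_append, htake, List.countP_replicate,
      if_pos (by simpa using (hxpos.trans_le hxa).ne')] at hsupp
    omega
  rw [← htake, ← hdrop, List.take_append_drop]

theorem mem_Skd_one_of_sortedAbs_eq {k : ℕ} {β : E p} {a : ℝ}
    (hβ : sortedAbs β = List.replicate k a ++ List.replicate (p - k) 0) : β ∈ Skd p k 1 := by
  refine ⟨?_, Finset.card_le_one.2 ?_⟩
  · rw [card_support_eq_countP_sortedAbs, hβ, List.countP_append, List.countP_replicate,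
      List.countP_replicate]
    split_ifs <;> simp_all
  · simp only [Finset.mem_image, Finset.mem_range, hβ]
    rintro _ ⟨m, hm, rfl⟩ _ ⟨m', hm', rfl⟩
    rw [List.getD_append _ _ _ _ (by simpa), List.getD_append _ _ _ _ (by simpa),
      List.getD_replicate _ hm, List.getD_replicate _ hm']

theorem mem_Skd_one_iff {k : ℕ} (hk1 : 1 ≤ k) (hkp : k ≤ p) (β : E p) :
    β ∈ Skd p k 1 ↔ ∃ a, sortedAbs β = List.replicate k a ++ List.replicate (p - k) 0 :=
  ⟨fun hβ => ⟨_, sortedAbs_eq_replicate_of_mem_Skd_one hk1 hkp hβ⟩,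
    fun ⟨_, hβ⟩ => mem_Skd_one_of_sortedAbs_eq hβ⟩

end SortedAbs

theorem Skd_one_inter_sphere {p k : ℕ} (hk1 : 1 ≤ k) (hkp : k ≤ p) :
    Skd p k 1 ∩ {x : E p | ‖x‖ = 1} = WithLp.ofLp ⁻¹' sparseFlat k (Real.sqrt k)⁻¹ := by
  have hnorm : ∀ x : E p, ‖x‖ = 1 ↔ ∑ i, x i ^ 2 = 1 := by
    simp [EuclideanSpace.norm_eq, Real.sqrt_eq_one]
  have hcoe : ∀ a : ℝ, ((List.replicate k a ++ List.replicate (p - k) 0 : List ℝ) : Multiset ℝ) =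
      Multiset.replicate k a + Multiset.replicate (p - k) 0 := fun a => by
    rw [← Multiset.coe_add, Multiset.coe_replicate, Multiset.coe_replicate]
  ext β
  simp only [mem_inter_iff, mem_ofPred_eq, mem_preimage, mem_Skd_one_iff hk1 hkp, hnorm]
  constructor
  · rintro ⟨⟨a, ha⟩, hβ⟩
    have hmap : (Finset.univ.val.map fun i => |β i|) =
        Multiset.replicate k a + Multiset.replicate (p - k) 0 := by
      rw [← coe_sortedAbs, ha, hcoe]
    have ha₀ : 0 ≤ a := nonneg_of_mem_sortedAbs (by rw [ha]; simp; omega)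
    have hka : (k : ℝ) * a ^ 2 = 1 := (sum_sq_eq_of_map_abs hmap).symm.trans hβ
    have ha : a = (Real.sqrt k)⁻¹ := by
      rw [← Real.sqrt_sq ha₀, ← Real.sqrt_inv, eq_inv_of_mul_eq_one_right hka]
    subst ha
    exact mem_sparseFlat_of_map_abs (by positivity) hmap
  · intro h
    have hmap := map_abs_of_mem_sparseFlat h
    rw [Fintype.card_fin] at hmap
    refine ⟨⟨_, sortedAbs_eq_of_coe_eq ?_ (by rw [hcoe]; exact hmap.symm)⟩, ?_⟩
    · refine List.pairwise_append.2 ⟨List.pairwise_replicate.2 (Or.inr le_rfl),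
        List.pairwise_replicate.2 (Or.inr le_rfl), fun x hx y hy => ?_⟩
      rw [List.eq_of_mem_replicate hx, List.eq_of_mem_replicate hy]
      positivity
    · rw [sum_sq_eq_of_map_abs hmap, inv_pow, Real.sq_sqrt (Nat.cast_nonneg k),
        mul_inv_cancel₀ (Nat.cast_ne_zero.2 (by omega))]

/-- `‖β‖_{k□1} = max{ ‖β‖₁/√k , √k·‖β‖_∞ }`. -/
theorem kdNorm_k_one (p k : ℕ) (hk1 : 1 ≤ k) (hkp : k ≤ p) (β : E p) :
    kdNorm p k 1 β =
      max ((Real.sqrt k)⁻¹ * ∑ i, |β i|) (Real.sqrt k * ⨆ i, |β i|) := by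
  rw [kdNorm, Skd_one_inter_sphere hk1 hkp]
  change gauge (convexHull ℝ (WithLp.linearEquiv 2 ℝ (Fin p → ℝ) ⁻¹'
    sparseFlat k (Real.sqrt k)⁻¹)) β = kOneNorm k (WithLp.ofLp β)
  rw [convexHull_preimage_linearEquiv, convexHull_sparseFlat_inv_sqrt hk1 (by simpa using hkp)]
  exact congrFun (gauge_setOf_le_one (f := fun x : E p => kOneNorm k (WithLp.ofLp x))
    (fun x => kOneNorm_nonneg k _) fun c hc x => kOneNorm_smul_of_nonneg k hc _) β

end
end

section
/- Let 1 ≤ k ≤ p and let ‖·‖_{k□1} be the structure norm of S_{k,1} (the gauge of the convex hull of S_{k,1} ∩ {x : ‖x‖₂ = 1}), with dual norm ‖θ‖_{k□1}⋆ = sup{⟨θ,β⟩ : ‖β‖_{k□1} ≤ 1}. Then for every θ ∈ ℝ^p, ‖θ‖_{k□1}⋆ = (1/√k)·Σ_{i=1}^k θ̄ᵢ, the scaled sum of the k largest absolute values of the entries of θ. -/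
open Metric Set

noncomputable section

/-!
A nonzero vector of `S_{k,1}` has exactly `k` nonzero entries, all of the same absolute value:
the `k` largest absolute values coincide, so if they vanish the vector does, and otherwise they
already fill the support. Hence the unit vectors of `S_{k,1}` are the vectors `k^{-1/2} ε 1_T`
with `|T| = k` and `|ε_i| = 1`, and `⟨θ, ·⟩` is at most `k^{-1/2} ∑_{i ∈ T} |θ_i|` on them, with
equality when `ε` carries the signs of `θ`; the best `T` indexes the `k` largest `|θ_i|`.
The convex hull of these vectors contains every `t e_i` with `|t| ≤ k^{-1/2}`, so it is a
neighbourhood of `0`, and the unit ball of the gauge is its closure, on which the linear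
functional has the same supremum.
-/

open Finset Topology

lemma exists_perm_antitone_sortedAbs {p : ℕ} (β : E p) :
    ∃ σ : Equiv.Perm (Fin p), Antitone (fun i => |β (σ i)|) ∧
      ∀ i : Fin p, (sortedAbs β).getD i 0 = |β (σ i)| := by
  set f : Fin p → ℝ := fun i => |β i|
  set σ : Equiv.Perm (Fin p) := Fin.revPerm.trans (Tuple.sort f)
  have hanti : Antitone (f ∘ σ) := fun i j hij =>
    Tuple.monotone_sort f (by simpa using Fin.rev_le_rev.mpr hij)
  have hsorted : sortedAbs β = List.ofFn (f ∘ σ) := by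
    apply List.Perm.eq_of_pairwise (le := (· ≥ ·)) (fun a b _ _ h₁ h₂ => le_antisymm h₂ h₁)
    · exact List.pairwise_insertionSort _ _
    · exact List.pairwise_ofFn.mpr fun i j hij => hanti hij.le
    · exact (List.perm_insertionSort _ _).trans (Equiv.Perm.ofFn_comp_perm σ f).symm
  refine ⟨σ, hanti, fun i => ?_⟩
  rw [hsorted, List.getD_eq_getElem _ _ (by simp), List.getElem_ofFn]
  rfl

lemma Fin.val_le_val_of_strictMono {k p : ℕ} {e : Fin k → Fin p} (he : StrictMono e) (i : Fin k) :
    (i : ℕ) ≤ e i := by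
  simpa using card_le_card_of_injOn e (s := Iio i) (t := Iio (e i))
    (fun j hj => by simpa using he (by simpa using hj)) he.injective.injOn

lemma Antitone.sum_le_sum_castLE {k p : ℕ} (hkp : k ≤ p) {h : Fin p → ℝ} (hh : Antitone h)
    {t : Finset (Fin p)} (ht : #t = k) :
    ∑ j ∈ t, h j ≤ ∑ i : Fin k, h (Fin.castLE hkp i) := by
  rw [← t.map_orderEmbOfFin_univ ht, sum_map]
  exact sum_le_sum fun i _ =>
    hh (Fin.le_iff_val_le_val.mpr (Fin.val_le_val_of_strictMono (t.orderEmbOfFin ht).strictMono i))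

lemma Antitone.card_filter_le_apply_le {p : ℕ} {α : Type*} [LinearOrder α] {h : Fin p → α}
    (hh : Antitone h) {a : α} {i : Fin p} (hi : h i < a) :
    #{j | a ≤ h j} ≤ i := by
  calc #{j | a ≤ h j} ≤ #(Iio i) := card_le_card fun j hj => by
        simpa using lt_of_not_ge fun hij =>
          (hi.trans_le (Finset.mem_filter.mp hj).2).not_ge (hh hij)
    _ = i := Fin.card_Iio i

lemma sum_range_sortedAbs_eq {p k : ℕ} (hkp : k ≤ p) {θ : E p} {σ : Equiv.Perm (Fin p)}
    (hσ : ∀ i : Fin p, (sortedAbs θ).getD i 0 = |θ (σ i)|) :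
    ∑ i ∈ range k, (sortedAbs θ).getD i 0 = ∑ i : Fin k, |θ (σ (Fin.castLE hkp i))| := by
  rw [← Fin.sum_univ_eq_sum_range]
  exact sum_congr rfl fun i _ => hσ (Fin.castLE hkp i)

lemma sum_abs_le_sum_sortedAbs {p k : ℕ} (hkp : k ≤ p) (θ : E p) {s : Finset (Fin p)}
    (hs : #s = k) : ∑ i ∈ s, |θ i| ≤ ∑ i ∈ range k, (sortedAbs θ).getD i 0 := by
  obtain ⟨σ, hanti, hσ⟩ := exists_perm_antitone_sortedAbs θ
  rw [sum_range_sortedAbs_eq hkp hσ]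
  calc ∑ i ∈ s, |θ i| = ∑ j ∈ s.map σ.symm.toEmbedding, |θ (σ j)| := by simp [sum_map]
    _ ≤ _ := hanti.sum_le_sum_castLE hkp (by simpa using hs)

lemma exists_sum_abs_eq_sum_sortedAbs {p k : ℕ} (hkp : k ≤ p) (θ : E p) :
    ∃ s : Finset (Fin p), #s = k ∧ ∑ i ∈ s, |θ i| = ∑ i ∈ range k, (sortedAbs θ).getD i 0 := by
  obtain ⟨σ, -, hσ⟩ := exists_perm_antitone_sortedAbs θ
  refine ⟨univ.map ((Fin.castLEEmb hkp).trans σ.toEmbedding), by simp, ?_⟩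
  rw [sum_range_sortedAbs_eq hkp hσ, sum_map]
  rfl

lemma EuclideanSpace.norm_sq_eq_card_mul_sq {ι : Type*} [Fintype ι] [DecidableEq ι]
    {x : EuclideanSpace ℝ ι} {T : Finset ι} {v : ℝ} (hx : ∀ i, |x i| = if i ∈ T then v else 0) :
    ‖x‖ ^ 2 = #T * v ^ 2 := by
  simp [EuclideanSpace.norm_sq_eq, hx, ite_pow, sum_ite_mem]

lemma mem_Skd_one_of_abs_eq {p k : ℕ} {x : E p} {T : Finset (Fin p)} (hT : #T = k) {v : ℝ}
    (hv : 0 < v) (hx : ∀ i, |x i| = if i ∈ T then v else 0) : x ∈ Skd p k 1 := by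
  have hsupp : ({i | x i ≠ 0} : Finset (Fin p)) = T := by
    ext i
    rw [Finset.mem_filter, ← abs_ne_zero, hx]
    split_ifs with hi <;> simp [hi, hv.ne']
  refine ⟨hsupp ▸ hT.le, ?_⟩
  have hkp : k ≤ p := by simpa [hT] using card_le_univ T
  obtain ⟨σ, hanti, hσ⟩ := exists_perm_antitone_sortedAbs x
  have hcount : #{j | v ≤ |x (σ j)|} = k := by
    rw [← hT, ← card_map σ.toEmbedding]
    congr 1
    ext j
    simp only [Finset.mem_map, Finset.mem_filter, Finset.mem_univ, true_and,
      Equiv.toEmbedding_apply]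
    constructor
    · rintro ⟨j, hj, rfl⟩
      by_contra hjT
      simp [hx, hjT] at hj
      linarith
    · intro hj
      exact ⟨σ.symm j, by simp [hx, hj], by simp⟩
  have htop : ∀ i : Fin p, (i : ℕ) < k → |x (σ i)| = v := by
    intro i hi
    by_contra hne
    have hlt : |x (σ i)| < v := by
      rw [hx] at hne ⊢
      split_ifs at hne ⊢ <;> simp_all
    have := hanti.card_filter_le_apply_le hlt
    omega
  refine card_le_one.mpr ?_
  simp only [Finset.mem_image, Finset.mem_range]
  rintro _ ⟨a, ha, rfl⟩ _ ⟨b, hb, rfl⟩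
  rw [hσ ⟨a, ha.trans_le hkp⟩, hσ ⟨b, hb.trans_le hkp⟩, htop _ ha, htop _ hb]

lemma exists_abs_eq_of_mem_Skd_one {p k : ℕ} (hk : 1 ≤ k) (hkp : k ≤ p) {x : E p}
    (hx : x ∈ Skd p k 1) :
    ∃ T : Finset (Fin p), #T = k ∧ ∃ v, 0 ≤ v ∧ ∀ i, |x i| = if i ∈ T then v else 0 := by
  obtain ⟨σ, hanti, hσ⟩ := exists_perm_antitone_sortedAbs x
  have hp : 0 < p := by omega
  set v := |x (σ ⟨0, hp⟩)|
  set T := univ.map ((Fin.castLEEmb hkp).trans σ.toEmbedding)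
  have hT : #T = k := by simp [T]
  -- all of the `k` largest absolute values coincide with the largest one
  have hin : ∀ j ∈ T, |x j| = v := by
    simp only [T, Finset.mem_map, Finset.mem_univ, true_and]
    rintro _ ⟨i, rfl⟩
    rw [Function.Embedding.trans_apply, Equiv.toEmbedding_apply, ← hσ,
      show v = _ from (hσ ⟨0, hp⟩).symm]
    exact card_le_one.mp hx.2 _ (mem_image_of_mem _ (Finset.mem_range.2 i.2)) _
      (mem_image_of_mem _ (Finset.mem_range.2 hk))
  have hout : ∀ j ∉ T, x j = 0 := by
    intro j hj
    rcases (abs_nonneg _ : 0 ≤ v).eq_or_lt with hv | hv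
    · have : |x j| ≤ v := by
        simpa using hanti (show (⟨0, hp⟩ : Fin p) ≤ σ.symm j from Nat.zero_le _)
      exact abs_nonpos_iff.mp (hv ▸ this)
    · -- `T` already has `k` nonzero entries, so it is the whole support
      have hsub : T ⊆ ({i | x i ≠ 0} : Finset (Fin p)) := fun i hi =>
        Finset.mem_filter.2 ⟨Finset.mem_univ _, abs_pos.mp ((hin i hi).symm ▸ hv)⟩
      have := eq_of_subset_of_card_le hsub (hx.1.trans hT.ge)
      by_contra hne
      exact hj (this ▸ Finset.mem_filter.2 ⟨Finset.mem_univ _, hne⟩)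
  refine ⟨T, hT, v, abs_nonneg _, fun i => ?_⟩
  split_ifs with hi
  exacts [hin i hi, by simp [hout i hi]]

lemma inner_le_of_mem_Skd_one {p k : ℕ} (hk : 1 ≤ k) (hkp : k ≤ p) (θ : E p) {x : E p}
    (hx : x ∈ Skd p k 1) (hnx : ‖x‖ = 1) :
    inner ℝ θ x ≤ (√k)⁻¹ * ∑ i ∈ range k, (sortedAbs θ).getD i 0 := by
  obtain ⟨T, hT, v, hv, habs⟩ := exists_abs_eq_of_mem_Skd_one hk hkp hx
  have hvk : v = (√k)⁻¹ := by
    have h := EuclideanSpace.norm_sq_eq_card_mul_sq habs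
    rw [hnx, hT] at h
    rw [← Real.sqrt_inv, ← Real.sqrt_sq hv]
    congr 1
    field_simp
    linarith
  have hzero : ∀ i ∉ T, x i = 0 := fun i hi => abs_eq_zero.mp (by simp [habs, hi])
  calc inner ℝ θ x = ∑ i ∈ T, θ i * x i := by
        simp only [PiLp.inner_apply, RCLike.inner_apply, conj_trivial]
        rw [← sum_subset (subset_univ T) fun i _ hi => by simp [hzero i hi]]
        exact sum_congr rfl fun i _ => mul_comm _ _
    _ ≤ ∑ i ∈ T, |θ i| * v := sum_le_sum fun i hi => by
        simpa [abs_mul, habs i, hi] using le_abs_self (θ i * x i)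
    _ = v * ∑ i ∈ T, |θ i| := by rw [mul_sum]; simp only [mul_comm]
    _ ≤ v * ∑ i ∈ range k, (sortedAbs θ).getD i 0 :=
        mul_le_mul_of_nonneg_left (sum_abs_le_sum_sortedAbs hkp θ hT) hv
    _ = _ := by rw [hvk]

def signVector {p : ℕ} (T : Finset (Fin p)) (ε : Fin p → ℝ) : E p :=
  WithLp.toLp 2 fun i => if i ∈ T then (√(#T : ℝ))⁻¹ * ε i else 0

lemma inner_signVector {p : ℕ} (θ : E p) {T : Finset (Fin p)} {ε : Fin p → ℝ}
    (hε : ∀ i ∈ T, θ i * ε i = |θ i|) :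
    inner ℝ θ (signVector T ε) = (√(#T : ℝ))⁻¹ * ∑ i ∈ T, |θ i| := by
  simp only [signVector, PiLp.inner_apply, RCLike.inner_apply, conj_trivial, ite_mul, zero_mul,
    sum_ite_mem, Finset.univ_inter, mul_sum]
  exact sum_congr rfl fun i hi => by rw [← hε i hi]; ring

lemma signVector_mem {p : ℕ} {T : Finset (Fin p)} (hT : T.Nonempty) {ε : Fin p → ℝ}
    (hε : ∀ i ∈ T, |ε i| = 1) : signVector T ε ∈ Skd p #T 1 ∩ {x : E p | ‖x‖ = 1} := by
  have hc : 0 < (√(#T : ℝ))⁻¹ := by simpa using hT.card_pos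
  have habs : ∀ i, |signVector T ε i| = if i ∈ T then (√(#T : ℝ))⁻¹ else 0 := fun i => by
    by_cases hi : i ∈ T <;> simp [signVector, hi, abs_mul, hε]
  refine ⟨mem_Skd_one_of_abs_eq rfl hc habs, ?_⟩
  have h := EuclideanSpace.norm_sq_eq_card_mul_sq habs
  rw [inv_pow, Real.sq_sqrt (Nat.cast_nonneg _),
    mul_inv_cancel₀ (by simpa using hT.card_pos.ne')] at h
  exact (pow_eq_one_iff_of_nonneg (norm_nonneg _) two_ne_zero).1 (by simpa using h)

lemma single_mem_convexHull_Skd_one {p k : ℕ} (hk : 1 ≤ k) (hkp : k ≤ p) (i : Fin p) {t : ℝ}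
    (ht : |t| ≤ (√k)⁻¹) :
    EuclideanSpace.single i t ∈ convexHull ℝ (Skd p k 1 ∩ {x : E p | ‖x‖ = 1}) := by
  obtain ⟨T, hiT, hT⟩ := exists_superset_card_eq (s := {i}) (n := k) (by simpa) (by simpa)
  subst hT
  have hiT : i ∈ T := hiT (Finset.mem_singleton_self i)
  set C := convexHull ℝ (Skd p #T 1 ∩ {x : E p | ‖x‖ = 1})
  set f := LinearMap.toSpanSingleton ℝ (E p) (EuclideanSpace.single i 1)
  have hf : ∀ t, f t = EuclideanSpace.single i t := fun t => by ext j; simp [f]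
  -- the midpoint of the sign vectors on `T` with signs `s` and `s (2 e_i - 1)`
  have hsign : ∀ s : ℝ, |s| = 1 → (√(#T : ℝ))⁻¹ * s ∈ f ⁻¹' C := by
    intro s hs
    rw [Set.mem_preimage, hf]
    have h₁ := signVector_mem ⟨i, hiT⟩ (ε := fun _ => s) (by simp [hs])
    have h₂ := signVector_mem ⟨i, hiT⟩ (ε := fun j => if j = i then s else -s)
      (fun j _ => by split_ifs <;> simp [hs])
    convert convex_convexHull ℝ _ (subset_convexHull ℝ _ h₁) (subset_convexHull ℝ _ h₂)
      (by norm_num : (0 : ℝ) ≤ 1 / 2) (by norm_num : (0 : ℝ) ≤ 1 / 2) (by norm_num) using 1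
    ext j
    by_cases hj : j ∈ T <;> by_cases hji : j = i <;> simp [signVector, hj, hji] <;> grind
  have := ((convex_convexHull ℝ _).linear_preimage f).ordConnected.out (hsign (-1) (by simp))
    (hsign 1 (by simp)) (by simpa [abs_le] using ht)
  rwa [Set.mem_preimage, hf] at this

lemma EuclideanSpace.mem_nhds_zero_of_forall_single_mem {ι : Type*} [Fintype ι] [DecidableEq ι]
    [Nonempty ι] {s : Set (EuclideanSpace ℝ ι)} (hs : Convex ℝ s) {r : ℝ} (hr : 0 < r)
    (h : ∀ i t, |t| ≤ r → EuclideanSpace.single i t ∈ s) : s ∈ 𝓝 0 := by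
  set n : ℝ := (Fintype.card ι : ℝ)
  have hn : 0 < n := by simp [n, Fintype.card_pos]
  refine Filter.mem_of_superset (ball_mem_nhds 0 (div_pos hr hn)) fun x hx => ?_
  have hx_avg : x = ∑ i, n⁻¹ • EuclideanSpace.single i (n * x i) := by
    ext j
    simp [WithLp.ofLp_sum, Pi.single_apply, hn.ne']
  rw [hx_avg]
  refine hs.sum_mem (fun _ _ => by positivity) (by simp [n]) fun i _ => h i _ ?_
  rw [abs_mul, abs_of_pos hn, ← le_div_iff₀' hn]
  exact (PiLp.norm_apply_le x i).trans (mem_ball_zero_iff.mp hx).le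

lemma convexHull_Skd_one_mem_nhds {p k : ℕ} (hk : 1 ≤ k) (hkp : k ≤ p) :
    convexHull ℝ (Skd p k 1 ∩ {x : E p | ‖x‖ = 1}) ∈ 𝓝 0 :=
  haveI : Nonempty (Fin p) := ⟨⟨0, by omega⟩⟩
  EuclideanSpace.mem_nhds_zero_of_forall_single_mem (convex_convexHull ℝ _) (by positivity)
    fun i _ ht => single_mem_convexHull_Skd_one hk hkp i ht

lemma ContinuousLinearMap.le_of_gauge_convexHull_le_one {F : Type*} [AddCommGroup F]
    [Module ℝ F] [TopologicalSpace F] [IsTopologicalAddGroup F] [ContinuousSMul ℝ F]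
    {s : Set F} (hs : convexHull ℝ s ∈ 𝓝 0) (f : F →L[ℝ] ℝ) {M : ℝ} (hf : ∀ x ∈ s, f x ≤ M)
    {x : F} (hx : gauge (convexHull ℝ s) x ≤ 1) : f x ≤ M :=
  closure_minimal (convexHull_min hf (convex_halfSpace_le f.toLinearMap.isLinear M))
    (isClosed_le f.continuous continuous_const)
    ((gauge_le_one_iff_mem_closure (convex_convexHull ℝ s) hs).mp hx)

/-- the dual norm of `‖·‖_{k□1}` is
`‖θ‖_{k□1}⋆ = (1/√k)·Σ_{i=1}^k θ̄ᵢ`, the scaled sum of the `k` largest absolute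
values of the entries of `θ`. -/
theorem dual_kdNorm_k_one (p k : ℕ) (hk1 : 1 ≤ k) (hkp : k ≤ p) (θ : E p) :
    sSup {r : ℝ | ∃ β : E p, kdNorm p k 1 β ≤ 1 ∧ r = (inner ℝ θ β : ℝ)} =
      (Real.sqrt k)⁻¹ * ∑ i ∈ Finset.range k, (sortedAbs θ).getD i 0 := by
  obtain ⟨T, hT, hsum⟩ := exists_sum_abs_eq_sum_sortedAbs hkp θ
  set ε : Fin p → ℝ := fun i => if θ i < 0 then -1 else 1
  have hε : ∀ i ∈ T, |ε i| = 1 := fun i _ => by by_cases h : θ i < 0 <;> simp [ε, h]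
  have hθε : ∀ i ∈ T, θ i * ε i = |θ i| := fun i _ => by
    by_cases h : θ i < 0
    · simp [ε, h, abs_of_neg h]
    · simp [ε, h, abs_of_nonneg (not_lt.mp h)]
  refine IsGreatest.csSup_eq ⟨⟨signVector T ε, ?_, ?_⟩, ?_⟩
  · subst hT
    exact gauge_le_one_of_mem (subset_convexHull ℝ _ (signVector_mem (card_pos.mp hk1) hε))
  · rw [inner_signVector θ hθε, hsum, hT]
  · rintro _ ⟨β, hβ, rfl⟩
    exact (innerSL ℝ θ).le_of_gauge_convexHull_le_one (convexHull_Skd_one_mem_nhds hk1 hkp)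
      (fun x hx => inner_le_of_mem_Skd_one hk1 hkp θ hx.1 hx.2) hβ

end
end

section
/- Let 1 ≤ k ≤ p and let B_{k□1} be the convex hull of S_{k,1} ∩ 𝕊^{p−1}. Then the set of extreme points of B_{k□1} equals S_{k,1} ∩ 𝕊^{p−1}, which is exactly the set of vectors in ℝ^p having exactly k nonzero entries, each of absolute value 1/√k. -/
open Metric Set

noncomputable section

/-! Every point of `S_{k,1} ∩ 𝕊^{p-1}` lies on the unit sphere of a strictly convex space, hence is
an extreme point of the unit ball and a fortiori of the smaller set `B_{k□1}`. For the explicit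
description: the descending absolute values of `x` are nonzero exactly at the first `‖x‖₀`
positions, so if the first `k` of them coincide (and `x ≠ 0`), `x` has exactly `k` nonzero entries
of a common modulus `c`, and `‖x‖ = 1` forces `k c² = 1`. -/

open scoped Finset

theorem extremePoints_convexHull_eq_of_subset_sphere {A : Type*} [NormedAddCommGroup A]
    [NormedSpace ℝ A] [StrictConvexSpace ℝ A] {S : Set A} {a : A} {r : ℝ}
    (hS : S ⊆ sphere a r) : extremePoints ℝ (convexHull ℝ S) = S := by
  refine extremePoints_convexHull_subset.antisymm fun x hx => ?_
  rcases eq_or_ne r 0 with rfl | hr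
  · rw [sphere_zero] at hS
    obtain rfl : x = a := hS hx
    rw [(subset_singleton_iff_eq.1 hS).resolve_left (nonempty_of_mem hx).ne_empty,
      convexHull_singleton, extremePoints_singleton]
    rfl
  have hball : convexHull ℝ S ⊆ closedBall a r :=
    convexHull_min (hS.trans sphere_subset_closedBall) (convex_closedBall a r)
  exact inter_extremePoints_subset_extremePoints_of_subset hball
    ⟨subset_convexHull ℝ S hx,
      StrictConvexSpace.sphere_subset_extremePoints_closedBall a hr (hS hx)⟩

theorem List.getD_ne_zero_iff_lt_countP {α : Type*} [LinearOrder α] [Zero α] {l : List α}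
    (hl : l.Pairwise (· ≥ ·)) (hnn : ∀ a ∈ l, 0 ≤ a) (i : ℕ) :
    l.getD i 0 ≠ 0 ↔ i < l.countP (· ≠ 0) := by
  induction l generalizing i with
  | nil => simp
  | cons a t ih =>
    have ih := ih hl.of_cons (fun b hb => hnn b (mem_cons_of_mem a hb))
    rcases eq_or_ne a 0 with rfl | ha
    · have hzero : ∀ b ∈ t, b = 0 := fun b hb =>
        le_antisymm (rel_of_pairwise_cons hl hb) (hnn b (mem_cons_of_mem 0 hb))
      have hcount : t.countP (· ≠ 0) = 0 := countP_eq_zero.2 (by simpa using hzero)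
      rw [countP_cons_of_neg (by simp), hcount]
      cases i with
      | zero => simp
      | succ i => rw [getD_cons_succ, ih, hcount]; simp
    · rw [countP_cons_of_pos (by simpa using ha)]
      cases i with
      | zero => simpa using ha
      | succ i => simpa using ih i
section sortedAbs

variable {p : ℕ} (x : E p)

theorem mem_sortedAbs {a : ℝ} : a ∈ sortedAbs x ↔ ∃ i, |x i| = a := by
  rw [sortedAbs, (List.perm_insertionSort _ _).mem_iff, List.mem_ofFn]

theorem countP_sortedAbs : (sortedAbs x).countP (· ≠ 0) = #{i | x i ≠ 0} := by
  rw [sortedAbs, (List.perm_insertionSort _ _).countP_eq, List.ofFn_eq_map, List.countP_map,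
    Finset.card, Finset.filter_val, ← Multiset.countP_eq_card_filter, Fin.univ_def,
    Multiset.coe_countP]
  exact List.countP_congr fun i _ => by simp

theorem sortedAbs_getD_ne_zero_iff (i : ℕ) :
    (sortedAbs x).getD i 0 ≠ 0 ↔ i < #{j | x j ≠ 0} := by
  rw [← countP_sortedAbs]
  refine List.getD_ne_zero_iff_lt_countP (List.pairwise_insertionSort _ _) (fun a ha => ?_) i
  obtain ⟨j, rfl⟩ := (mem_sortedAbs x).1 ha
  exact abs_nonneg _

theorem exists_abs_eq_sortedAbs_getD {i : ℕ} (hi : i < #{j | x j ≠ 0}) :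
    ∃ j, x j ≠ 0 ∧ |x j| = (sortedAbs x).getD i 0 := by
  have hne := (sortedAbs_getD_ne_zero_iff x i).2 hi
  have hlen : i < (sortedAbs x).length := by
    by_contra h
    exact hne (List.getD_eq_default _ _ (not_lt.1 h))
  rw [List.getD_eq_getElem _ _ hlen] at hne ⊢
  obtain ⟨j, hj⟩ := (mem_sortedAbs x).1 (List.getElem_mem hlen)
  exact ⟨j, fun h => hne (by rw [← hj, h, abs_zero]), hj⟩

theorem exists_sortedAbs_getD_eq_abs {j : Fin p} (hj : x j ≠ 0) :
    ∃ i < #{j | x j ≠ 0}, (sortedAbs x).getD i 0 = |x j| := by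
  obtain ⟨i, hi, hget⟩ := List.mem_iff_getElem.1 ((mem_sortedAbs x).2 ⟨j, rfl⟩)
  have hgetD : (sortedAbs x).getD i 0 = |x j| := (List.getD_eq_getElem _ _ hi).trans hget
  exact ⟨i, (sortedAbs_getD_ne_zero_iff x i).1 (hgetD ▸ abs_ne_zero.2 hj), hgetD⟩

end sortedAbs

theorem mem_Skd_one_iff_s11 {p k : ℕ} {x : E p} (hx : x ≠ 0) :
    x ∈ Skd p k 1 ↔ #{i | x i ≠ 0} = k ∧ ∀ i j, x i ≠ 0 → x j ≠ 0 → |x i| = |x j| := by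
  have hpos : 0 < #{i | x i ≠ 0} := by
    obtain ⟨i, hi⟩ : ∃ i, x i ≠ 0 := by
      by_contra! h
      exact hx (by ext i; exact h i)
    exact Finset.card_pos.2 ⟨i, by simpa using hi⟩
  constructor
  · rintro ⟨hle, himg⟩
    have hconst : ∀ i < k, (sortedAbs x).getD i 0 = (sortedAbs x).getD 0 0 := fun i hi =>
      Finset.card_le_one.1 himg _ (Finset.mem_image_of_mem _ (Finset.mem_range.2 hi)) _
        (Finset.mem_image_of_mem _ (Finset.mem_range.2 (by omega)))
    have hcard : #{i | x i ≠ 0} = k := by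
      refine hle.antisymm (not_lt.1 fun hlt => ?_)
      have hfirst := (sortedAbs_getD_ne_zero_iff x 0).2 hpos
      have hlast := mt (sortedAbs_getD_ne_zero_iff x _).1 (lt_irrefl _)
      exact hlast (hconst _ hlt ▸ hfirst)
    refine ⟨hcard, fun i j hi hj => ?_⟩
    obtain ⟨a, ha, hai⟩ := exists_sortedAbs_getD_eq_abs x hi
    obtain ⟨b, hb, hbj⟩ := exists_sortedAbs_getD_eq_abs x hj
    rw [← hai, ← hbj, hconst a (hcard ▸ ha), hconst b (hcard ▸ hb)]
  · rintro ⟨hcard, heq⟩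
    refine ⟨hcard.le, Finset.card_le_one.2 ?_⟩
    simp only [Finset.mem_image, Finset.mem_range]
    rintro _ ⟨a, ha, rfl⟩ _ ⟨b, hb, rfl⟩
    obtain ⟨i, hi, hai⟩ := exists_abs_eq_sortedAbs_getD x (hcard ▸ ha)
    obtain ⟨j, hj, hbj⟩ := exists_abs_eq_sortedAbs_getD x (hcard ▸ hb)
    rw [← hai, ← hbj, heq i j hi hj]

theorem EuclideanSpace.norm_sq_eq_card_mul_sq_s11 {ι : Type*} [Fintype ι]
    {x : EuclideanSpace ℝ ι} {c : ℝ} (hc : ∀ i, x i ≠ 0 → |x i| = c) :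
    ‖x‖ ^ 2 = #{i | x i ≠ 0} * c ^ 2 := by
  rw [EuclideanSpace.real_norm_sq_eq, ← Finset.sum_filter_of_ne fun i _ h => by simpa using h,
    Finset.sum_congr rfl fun i hi => by rw [← sq_abs, hc i (Finset.mem_filter.1 hi).2],
    Finset.sum_const, nsmul_eq_mul]

theorem Skd_one_inter_sphere_eq {p k : ℕ} (hk : 1 ≤ k) :
    Skd p k 1 ∩ {x : E p | ‖x‖ = 1} =
      {x : E p | #{i | x i ≠ 0} = k ∧ ∀ i, x i ≠ 0 → |x i| = (Real.sqrt k)⁻¹} := by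
  ext x
  simp only [mem_inter_iff, mem_ofPred_eq]
  constructor
  · rintro ⟨hS, hx1⟩
    obtain ⟨hcard, heq⟩ := (mem_Skd_one_iff_s11 (ne_zero_of_norm_ne_zero (hx1 ▸ one_ne_zero))).1 hS
    refine ⟨hcard, fun i hi => ?_⟩
    have hnorm := EuclideanSpace.norm_sq_eq_card_mul_sq_s11 fun j hj => heq j i hj hi
    rw [hx1, hcard, one_pow] at hnorm
    rw [← Real.sqrt_sq (abs_nonneg (x i)), ← Real.sqrt_inv, eq_inv_of_mul_eq_one_right hnorm.symm]
  · rintro ⟨hcard, habs⟩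
    have hx1 : ‖x‖ = 1 := by
      have hnorm := EuclideanSpace.norm_sq_eq_card_mul_sq_s11 habs
      rw [hcard, inv_pow, Real.sq_sqrt k.cast_nonneg, mul_inv_cancel₀ (by positivity)] at hnorm
      exact (pow_eq_one_iff_of_nonneg (norm_nonneg x) two_ne_zero).1 hnorm
    refine ⟨(mem_Skd_one_iff_s11 (ne_zero_of_norm_ne_zero (hx1 ▸ one_ne_zero))).2
      ⟨hcard, fun i j hi hj => (habs i hi).trans (habs j hj).symm⟩, hx1⟩

theorem extremePoints_kdBall_k_one_general (p k : ℕ) (hk1 : 1 ≤ k) :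
    Set.extremePoints ℝ (convexHull ℝ (Skd p k 1 ∩ {x : E p | ‖x‖ = 1})) =
        Skd p k 1 ∩ {x : E p | ‖x‖ = 1} ∧
      Skd p k 1 ∩ {x : E p | ‖x‖ = 1} =
        {x : E p | (Finset.univ.filter fun i => x i ≠ 0).card = k ∧
          ∀ i : Fin p, x i ≠ 0 → |x i| = (Real.sqrt k)⁻¹} :=
  ⟨extremePoints_convexHull_eq_of_subset_sphere fun _ hx => mem_sphere_zero_iff_norm.2 hx.2,
    Skd_one_inter_sphere_eq hk1⟩

/-- the extreme points of `B_{k□1} = conv(S_{k,1} ∩ 𝕊^{p−1})` are exactly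
`S_{k,1} ∩ 𝕊^{p−1}`, which is the set of vectors with exactly `k` nonzero entries,
each of absolute value `1/√k`. -/
theorem extremePoints_kdBall_k_one (p k : ℕ) (hk1 : 1 ≤ k) (hkp : k ≤ p) :
    Set.extremePoints ℝ (convexHull ℝ (Skd p k 1 ∩ {x : E p | ‖x‖ = 1})) =
        Skd p k 1 ∩ {x : E p | ‖x‖ = 1} ∧
      Skd p k 1 ∩ {x : E p | ‖x‖ = 1} =
        {x : E p | (Finset.univ.filter fun i => x i ≠ 0).card = k ∧
          ∀ i : Fin p, x i ≠ 0 → |x i| = (Real.sqrt k)⁻¹} :=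
  extremePoints_kdBall_k_one_general p k hk1

end
end

section
/- Let S ⊆ ℝ^p be a closed scale-invariant set whose linear span is ℝ^p, let Γ ∈ ℝ^{p×p}, and let δ > 0. Suppose |vᵀΓv| ≤ δ·‖v‖₂² for every v of the form v = s₁ + s₂ with s₁, s₂ ∈ S. Then |vᵀΓv| ≤ 3δ·‖v‖_S² for every v ∈ ℝ^p. -/
/-!
Let `B` be the bilinear form of `Γ`. For unit vectors `x, y ∈ S`, polarisation together with the
hypothesis applied to `x + y`, `x` and `y` gives `|B x y + B y x| ≤ 6δ`. A bound on a bilinear form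
over `s × t` persists over `convexHull s × convexHull t`, since each partial map is linear, so
`|B u u| ≤ 3δ` on the convex hull of the unit vectors of `S` and `|vᵀΓv| ≤ 3δ r²` whenever `v` lies
in its `r`-dilate. Letting `r` decrease to the gauge gives the claim.
-/

open Metric Set Matrix
open Filter Topology
open scoped Pointwise

noncomputable section

/-- The structure norm `‖·‖_S`: the gauge of the convex hull of the unit-norm
elements of `S`. -/
def structNorm {p : ℕ} (S : Set (E p)) (β : E p) : ℝ :=
  gauge (convexHull ℝ {β ∈ S | ‖β‖ = 1}) β

/-- The quadratic form `vᵀ Γ v`. -/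
def quadForm {p : ℕ} (Γ : Matrix (Fin p) (Fin p) ℝ) (v : E p) : ℝ :=
  dotProduct (fun i => v i) (Γ.mulVec fun i => v i)

section RealVectorSpace

variable {V W : Type*} [AddCommGroup V] [Module ℝ V] [AddCommGroup W] [Module ℝ W]

theorem LinearMap.convex_setOf_abs_apply_le (f : V →ₗ[ℝ] ℝ) (c : ℝ) :
    Convex ℝ {x | |f x| ≤ c} := by
  simpa only [Set.preimage, Set.mem_Icc, ← abs_le] using (convex_Icc (-c) c).linear_preimage f

theorem LinearMap.abs_apply_le_of_mem_convexHull (B : V →ₗ[ℝ] W →ₗ[ℝ] ℝ) {s : Set V}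
    {t : Set W} {c : ℝ} (h : ∀ x ∈ s, ∀ y ∈ t, |B x y| ≤ c) {x : V} {y : W}
    (hx : x ∈ convexHull ℝ s) (hy : y ∈ convexHull ℝ t) : |B x y| ≤ c := by
  have hx' : ∀ y ∈ t, |B x y| ≤ c := fun y hy =>
    convexHull_min (fun x hx => h x hx y hy) ((B.flip y).convex_setOf_abs_apply_le c) hx
  exact convexHull_min hx' ((B x).convex_setOf_abs_apply_le c) hy

theorem LinearMap.abs_apply_self_le_of_mem_smul_convexHull (B : V →ₗ[ℝ] V →ₗ[ℝ] ℝ)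
    {s : Set V} {c r : ℝ} (h : ∀ x ∈ s, ∀ y ∈ s, |B x y + B y x| ≤ 2 * c) {v : V}
    (hv : v ∈ r • convexHull ℝ s) : |B v v| ≤ c * r ^ 2 := by
  obtain ⟨u, hu, rfl⟩ := hv
  have hu2 : |B u u + B u u| ≤ 2 * c := (B + B.flip).abs_apply_le_of_mem_convexHull h hu hu
  have hBu : |B u u| ≤ c := by rw [← two_mul, abs_mul, abs_two] at hu2; linarith
  have hBr : B (r • u) (r • u) = r ^ 2 * B u u := by
    simp only [map_smul, LinearMap.smul_apply, smul_eq_mul]; ring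
  rw [hBr, abs_mul, abs_of_nonneg (sq_nonneg r), mul_comm c]
  exact mul_le_mul_of_nonneg_left hBu (sq_nonneg r)

theorem exists_pos_mem_smul_convexHull_of_mem_span {s : Set V} (hneg : ∀ x ∈ s, -x ∈ s)
    {v : V} (hv : v ∈ Submodule.span ℝ s) (hv0 : v ≠ 0) :
    ∃ r : ℝ, 0 < r ∧ v ∈ r • convexHull ℝ s := by
  have hK : ∀ x ∈ convexHull ℝ s, -x ∈ convexHull ℝ s := fun x hx => by
    have hs : -s ⊆ s := fun y hy => neg_neg y ▸ hneg (-y) hy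
    exact convexHull_mono hs (by rwa [convexHull_neg, Set.neg_mem_neg])
  suffices v = 0 ∨ ∃ r : ℝ, 0 < r ∧ v ∈ r • convexHull ℝ s from this.resolve_left hv0
  clear hv0
  induction hv using Submodule.span_induction with
  | mem x hx => exact .inr ⟨1, one_pos, by rw [one_smul]; exact subset_convexHull ℝ s hx⟩
  | zero => exact .inl rfl
  | add x y _ _ hx hy =>
    rcases hx with rfl | ⟨a, ha, hxa⟩
    · simpa using hy
    rcases hy with rfl | ⟨b, hb, hyb⟩
    · simpa using Or.inr ⟨a, ha, hxa⟩
    refine .inr ⟨a + b, add_pos ha hb, ?_⟩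
    rw [(convex_convexHull ℝ s).add_smul ha.le hb.le]
    exact add_mem_add hxa hyb
  | smul c x _ hx =>
    rcases hx with rfl | ⟨a, ha, u, hu, rfl⟩
    · simp
    rcases lt_trichotomy c 0 with hc | rfl | hc
    · refine .inr ⟨-c * a, mul_pos (neg_pos.2 hc) ha, -u, hK u hu, ?_⟩
      simp only [smul_neg, smul_smul, ← neg_smul, neg_mul, neg_neg]
    · simp
    · exact .inr ⟨c * a, mul_pos hc ha, u, hu, by simp only [smul_smul]⟩

theorem le_mul_gauge_sq {s : Set V} {x : V} {a C : ℝ} (hC : 0 ≤ C)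
    (hx : ∃ r : ℝ, 0 < r ∧ x ∈ r • s) (h : ∀ r, 0 < r → x ∈ r • s → a ≤ C * r ^ 2) :
    a ≤ C * gauge s x ^ 2 := by
  have hlt : ∀ ρ, gauge s x < ρ → a ≤ C * ρ ^ 2 := fun ρ hρ => by
    obtain ⟨b, ⟨hb, hxb⟩, hbρ⟩ :=
      exists_lt_of_csInf_lt (s := {r : ℝ | 0 < r ∧ x ∈ r • s}) hx hρ
    exact (h b hb hxb).trans (by gcongr)
  have hcont : Tendsto (fun ρ => C * ρ ^ 2) (𝓝[>] gauge s x) (𝓝 (C * gauge s x ^ 2)) :=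
    ((continuous_const.mul (continuous_pow 2)).tendsto _).mono_left nhdsWithin_le_nhds
  exact ge_of_tendsto hcont (eventually_nhdsWithin_of_forall hlt)

end RealVectorSpace

section Euclidean

variable {p : ℕ}

def quadBilin (Γ : Matrix (Fin p) (Fin p) ℝ) : E p →ₗ[ℝ] E p →ₗ[ℝ] ℝ :=
  let L := (WithLp.linearEquiv 2 ℝ (Fin p → ℝ)).toLinearMap
  (Matrix.toBilin' Γ).compl₁₂ L L

theorem quadForm_eq_quadBilin (Γ : Matrix (Fin p) (Fin p) ℝ) (v : E p) :
    quadForm Γ v = quadBilin Γ v v := by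
  rw [quadBilin, LinearMap.compl₁₂_apply, Matrix.toBilin'_apply']
  rfl

variable {S : Set (E p)} {Γ : Matrix (Fin p) (Fin p) ℝ} {δ : ℝ}

theorem ScaleInvariant.span_setOf_norm_eq_one (hscale : ScaleInvariant S) :
    Submodule.span ℝ {β ∈ S | ‖β‖ = 1} = Submodule.span ℝ S := by
  refine le_antisymm (Submodule.span_mono fun β hβ => hβ.1) (Submodule.span_le.2 fun β hβ => ?_)
  rcases eq_or_ne ‖β‖ 0 with hβ0 | hβ0
  · rw [norm_eq_zero.1 hβ0]; exact Submodule.zero_mem _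
  have hunit : ‖β‖⁻¹ • β ∈ {β ∈ S | ‖β‖ = 1} :=
    ⟨hscale _ β hβ, by rw [norm_smul, norm_inv, norm_norm, inv_mul_cancel₀ hβ0]⟩
  have hβ : β = ‖β‖ • ‖β‖⁻¹ • β := by rw [smul_smul, mul_inv_cancel₀ hβ0, one_smul]
  rw [SetLike.mem_coe, hβ]
  exact Submodule.smul_mem _ _ (Submodule.subset_span hunit)

theorem ScaleInvariant.abs_quadForm_le (hscale : ScaleInvariant S)
    (hquad : ∀ s₁ ∈ S, ∀ s₂ ∈ S, |quadForm Γ (s₁ + s₂)| ≤ δ * ‖s₁ + s₂‖ ^ 2) {s : E p}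
    (hs : s ∈ S) : |quadForm Γ s| ≤ δ * ‖s‖ ^ 2 := by
  have hhalf : (2⁻¹ : ℝ) • s + (2⁻¹ : ℝ) • s = s := by rw [← add_smul]; norm_num
  have h := hquad _ (hscale 2⁻¹ s hs) _ (hscale 2⁻¹ s hs)
  rwa [hhalf] at h

theorem ScaleInvariant.abs_quadBilin_add_flip_le (hscale : ScaleInvariant S) (hδ : 0 ≤ δ)
    (hquad : ∀ s₁ ∈ S, ∀ s₂ ∈ S, |quadForm Γ (s₁ + s₂)| ≤ δ * ‖s₁ + s₂‖ ^ 2) {x y : E p}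
    (hx : x ∈ {β ∈ S | ‖β‖ = 1}) (hy : y ∈ {β ∈ S | ‖β‖ = 1}) :
    |quadBilin Γ x y + quadBilin Γ y x| ≤ 2 * (3 * δ) := by
  have hpolar : quadBilin Γ x y + quadBilin Γ y x =
      quadForm Γ (x + y) - quadForm Γ x - quadForm Γ y := by
    simp only [quadForm_eq_quadBilin, map_add, LinearMap.add_apply]; ring
  have hxy : ‖x + y‖ ^ 2 ≤ 4 := by
    have := norm_add_le x y
    rw [hx.2, hy.2] at this
    nlinarith [norm_nonneg (x + y)]
  have hsum : |quadForm Γ (x + y)| ≤ δ * 4 := (hquad x hx.1 y hy.1).trans (by gcongr)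
  have hxx := hscale.abs_quadForm_le hquad hx.1
  have hyy := hscale.abs_quadForm_le hquad hy.1
  rw [hx.2, one_pow, mul_one] at hxx
  rw [hy.2, one_pow, mul_one] at hyy
  rw [hpolar, abs_le]
  rw [abs_le] at hsum hxx hyy
  constructor <;> linarith

end Euclidean

theorem quad_upper_general (p : ℕ) (S : Set (E p))
    (hscale : ScaleInvariant S) (hspan : Submodule.span ℝ S = ⊤)
    (Γ : Matrix (Fin p) (Fin p) ℝ) (δ : ℝ) (hδ : 0 < δ)
    (hquad : ∀ s₁ ∈ S, ∀ s₂ ∈ S, |quadForm Γ (s₁ + s₂)| ≤ δ * ‖s₁ + s₂‖ ^ 2) :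
    ∀ v : E p, |quadForm Γ v| ≤ 3 * δ * (structNorm S v) ^ 2 := by
  intro v
  rcases eq_or_ne v 0 with rfl | hv0
  · simp [structNorm, quadForm_eq_quadBilin]
  have hneg : ∀ x ∈ {β ∈ S | ‖β‖ = 1}, -x ∈ {β ∈ S | ‖β‖ = 1} := fun x hx =>
    ⟨by simpa using hscale (-1) x hx.1, by rw [norm_neg, hx.2]⟩
  have hv : v ∈ Submodule.span ℝ {β ∈ S | ‖β‖ = 1} := by
    rw [hscale.span_setOf_norm_eq_one, hspan]
    exact Submodule.mem_top
  refine le_mul_gauge_sq (by positivity) (exists_pos_mem_smul_convexHull_of_mem_span hneg hv hv0)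
    fun r _ hr => ?_
  rw [quadForm_eq_quadBilin]
  exact (quadBilin Γ).abs_apply_self_le_of_mem_smul_convexHull
    (fun x hx y hy => hscale.abs_quadBilin_add_flip_le hδ.le hquad hx hy) hr

/-- if `|vᵀΓv| ≤ δ‖v‖₂²` for every `v = s₁ + s₂` with `s₁, s₂ ∈ S`, then
`|vᵀΓv| ≤ 3δ‖v‖_S²` for every `v`. -/
theorem quad_upper (p : ℕ) (S : Set (E p)) (hclosed : IsClosed S)
    (hscale : ScaleInvariant S) (hspan : Submodule.span ℝ S = ⊤)
    (Γ : Matrix (Fin p) (Fin p) ℝ) (δ : ℝ) (hδ : 0 < δ)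
    (hquad : ∀ s₁ ∈ S, ∀ s₂ ∈ S, |quadForm Γ (s₁ + s₂)| ≤ δ * ‖s₁ + s₂‖ ^ 2) :
    ∀ v : E p, |quadForm Γ v| ≤ 3 * δ * (structNorm S v) ^ 2 :=
  quad_upper_general p S hscale hspan Γ δ hδ hquad
end
end
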